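/- arXiv:2404.17131 — 7 statements merged into one kernel-verified Lean document; each statement's English description precedes it below -/
import Mathlib

section
/- Let T₁ ≥ T₂ ≥ ⋯ be a non-increasing sequence of positive contractions on a Hilbert space H. Then the strong operator limit T = lim_n T_n exists, and the projections P_n onto the fixed-point spaces of T_n converge strongly to the projection P onto the fixed-point space of T. -/
open Filter Topology

noncomputable section

local notation "⟪" x ", " y "⟫" => @inner ℂ _ _ x y

variable {H : Type*} [NormedAddCommGroup H] [InnerProductSpace ℂ H] [CompleteSpace H]

/-!
For `0 ≤ A ≤ 1` one has `A ^ 2 ≤ A`, i.e. `‖A ξ‖ ^ 2 ≤ re ⟪A ξ, ξ⟫`. Applied to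
`A = T n - T m` this bounds `‖T n ξ - T m ξ‖ ^ 2` by the increments of the decreasing,
nonnegative quadratic forms `re ⟪T n ξ, ξ⟫`, so `T n ξ` is Cauchy. Applied to `A = 1 - S` it
shows that `S ξ = ξ` as soon as `‖ξ‖ ^ 2 ≤ re ⟪S ξ, ξ⟫`; hence the fixed spaces of the `T n`
decrease, and the fixed space of the limit is their intersection. Finally, the projections onto a
decreasing sequence of closed subspaces converge strongly to the projection onto the intersection:
their complements increase, and the closure of the union of the complements is the complement of
the intersection.
-/

open RCLike Submodule

section

variable {𝕜 E : Type*} [RCLike 𝕜] [NormedAddCommGroup E] [InnerProductSpace 𝕜 E]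

instance Submodule.HasOrthogonalProjection.iInf [CompleteSpace E] {ι : Type*}
    (U : ι → Submodule 𝕜 E) [∀ i, (U i).HasOrthogonalProjection] :
    (⨅ i, U i).HasOrthogonalProjection := by
  have : ⨅ i, U i = (⨆ i, (U i)ᗮ)ᗮ := by
    simp only [← iInf_orthogonal, orthogonal_orthogonal]
  rw [this]
  infer_instance

theorem starProjection_tendsto_iInf [CompleteSpace E] {ι : Type*} [Preorder ι]
    (U : ι → Submodule 𝕜 E) [∀ i, (U i).HasOrthogonalProjection] (hU : Antitone U) (x : E) :
    Tendsto (fun i => (U i).starProjection x) atTop (𝓝 ((⨅ i, U i).starProjection x)) := by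
  have hclosure : (⨆ i, (U i)ᗮ).topologicalClosure = (⨅ i, U i)ᗮ := by
    simp only [← orthogonal_orthogonal_eq_closure, ← iInf_orthogonal, orthogonal_orthogonal]
  have hcompl := starProjection_tendsto_closure_iSup (fun i => (U i)ᗮ)
    (fun i j hij => orthogonal_le (hU hij)) x
  simp only [hclosure, starProjection_orthogonal_val] at hcompl
  simpa using (tendsto_const_nhds (x := x)).sub hcompl

namespace ContinuousLinearMap

theorem IsStarProjection.eq_starProjection_of_forall_mem_iff [CompleteSpace E]
    {p : E →L[𝕜] E} (hp : IsStarProjection p) (K : Submodule 𝕜 E) [K.HasOrthogonalProjection]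
    (hK : ∀ x, x ∈ K ↔ p x = x) : p = K.starProjection := by
  have hrange : p.range = K := by
    ext x
    rw [hK]
    exact LinearMap.IsIdempotentElem.mem_range_iff
      (IsIdempotentElem.toLinearMap hp.isIdempotentElem)
  rw [IsStarProjection.ext_iff hp isStarProjection_starProjection, range_starProjection, hrange]

def fixedSubmodule (S : E →L[𝕜] E) : Submodule 𝕜 E :=
  (S - 1).ker

@[simp]
theorem mem_fixedSubmodule {S : E →L[𝕜] E} {x : E} : x ∈ S.fixedSubmodule ↔ S x = x := by
  simp [fixedSubmodule, sub_eq_zero]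

instance fixedSubmodule.hasOrthogonalProjection [CompleteSpace E] (S : E →L[𝕜] E) :
    S.fixedSubmodule.HasOrthogonalProjection :=
  inferInstanceAs (S - 1).ker.HasOrthogonalProjection

theorem re_inner_apply_le_of_le {A B : E →L[𝕜] E} (h : A ≤ B) (x : E) :
    re (inner 𝕜 (A x) x) ≤ re (inner 𝕜 (B x) x) := by
  simpa [inner_sub_left] using ((le_def A B).mp h).re_inner_nonneg_left x

end ContinuousLinearMap

end

theorem cauchySeq_of_norm_sub_sq_le {X : Type*} [SeminormedAddCommGroup X] {u : ℕ → X}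
    {f : ℕ → ℝ} (hf : Antitone f) (hbdd : BddBelow (Set.range f))
    (h : ∀ n m, n ≤ m → ‖u n - u m‖ ^ 2 ≤ f n - f m) : CauchySeq u := by
  rw [Metric.cauchySeq_iff']
  intro ε hε
  obtain ⟨N, hN⟩ := Metric.cauchySeq_iff'.mp (tendsto_atTop_ciInf hf hbdd).cauchySeq (ε ^ 2)
    (by positivity)
  refine ⟨N, fun n hn => ?_⟩
  have hsq : ‖u n - u N‖ ^ 2 < ε ^ 2 :=
    calc ‖u n - u N‖ ^ 2 = ‖u N - u n‖ ^ 2 := by rw [norm_sub_rev]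
      _ ≤ f N - f n := h N n hn
      _ ≤ dist (f n) (f N) := by rw [Real.dist_eq, abs_sub_comm]; exact le_abs_self _
      _ < ε ^ 2 := hN n hn
  rw [dist_eq_norm]
  exact lt_of_pow_lt_pow_left₀ 2 hε.le hsq

namespace ContinuousLinearMap

variable {E : Type*} [NormedAddCommGroup E] [InnerProductSpace ℂ E] [CompleteSpace E]
  {S : E →L[ℂ] E}

theorem norm_apply_sq_le_re_inner (h0 : 0 ≤ S) (h1 : S ≤ 1) (ξ : E) :
    ‖S ξ‖ ^ 2 ≤ re ⟪S ξ, ξ⟫ := by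
  have hsq : S ^ 2 ≤ S := by simpa using CStarAlgebra.pow_antitone h0 h1 one_le_two
  have hsymm : ⟪(S ^ 2) ξ, ξ⟫ = ⟪S ξ, S ξ⟫ :=
    (IsSelfAdjoint.of_nonneg h0).isSymmetric (S ξ) ξ
  calc ‖S ξ‖ ^ 2 = re ⟪(S ^ 2) ξ, ξ⟫ := by rw [hsymm, inner_self_eq_norm_sq]
    _ ≤ re ⟪S ξ, ξ⟫ := re_inner_apply_le_of_le hsq ξ

theorem norm_apply_sub_self_sq_le (h0 : 0 ≤ S) (h1 : S ≤ 1) (ξ : E) :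
    ‖S ξ - ξ‖ ^ 2 ≤ ‖ξ‖ ^ 2 - re ⟪S ξ, ξ⟫ := by
  have := norm_apply_sq_le_re_inner (sub_nonneg.mpr h1) (sub_le_self 1 h0) ξ
  rwa [sub_apply, one_apply_eq_self, norm_sub_rev, inner_sub_left, map_sub,
    inner_self_eq_norm_sq] at this

theorem apply_eq_self_of_norm_sq_le_re_inner (h0 : 0 ≤ S) (h1 : S ≤ 1) {ξ : E}
    (h : ‖ξ‖ ^ 2 ≤ re ⟪S ξ, ξ⟫) : S ξ = ξ := by
  have hle : ‖S ξ - ξ‖ ^ 2 ≤ 0 := (norm_apply_sub_self_sq_le h0 h1 ξ).trans (by linarith)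
  simpa [sub_eq_zero] using hle

theorem apply_eq_self_of_le {A : E →L[ℂ] E} (h0 : 0 ≤ S) (h1 : S ≤ 1) (hAS : A ≤ S) {ξ : E}
    (hA : A ξ = ξ) : S ξ = ξ :=
  apply_eq_self_of_norm_sq_le_re_inner h0 h1 <| by
    simpa only [hA, inner_self_eq_norm_sq] using re_inner_apply_le_of_le hAS ξ

variable {T : ℕ → E →L[ℂ] E}

theorem cauchySeq_apply_of_antitone (hpos : ∀ n, 0 ≤ T n) (hcontr : ∀ n, T n ≤ 1)
    (hT : Antitone T) (ξ : E) : CauchySeq fun n => T n ξ := by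
  refine cauchySeq_of_norm_sub_sq_le (f := fun n => re ⟪T n ξ, ξ⟫)
    (fun n m h => re_inner_apply_le_of_le (hT h) ξ) ⟨0, ?_⟩ fun n m h => ?_
  · rintro _ ⟨n, rfl⟩
    simpa using re_inner_apply_le_of_le (hpos n) ξ
  · simpa [inner_sub_left] using norm_apply_sq_le_re_inner (sub_nonneg.mpr (hT h))
      ((sub_le_self _ (hpos m)).trans (hcontr n)) ξ

theorem exists_tendsto_apply_of_antitone (hpos : ∀ n, 0 ≤ T n)
    (hcontr : ∀ n, T n ≤ 1) (hT : Antitone T) :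
    ∃ L : E →L[ℂ] E, ∀ ξ, Tendsto (fun n => T n ξ) atTop (𝓝 (L ξ)) := by
  choose g hg using fun ξ =>
    cauchySeq_tendsto_of_complete (cauchySeq_apply_of_antitone hpos hcontr hT ξ)
  exact ⟨continuousLinearMapOfTendsto T (tendsto_pi_nhds.mpr hg), hg⟩

theorem apply_eq_self_iff_forall_of_tendsto (hpos : ∀ n, 0 ≤ T n) (hcontr : ∀ n, T n ≤ 1)
    (hT : Antitone T) {L : E →L[ℂ] E} (hL : ∀ ξ, Tendsto (fun n => T n ξ) atTop (𝓝 (L ξ)))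
    (ξ : E) : L ξ = ξ ↔ ∀ n, T n ξ = ξ := by
  refine ⟨fun hξ n => apply_eq_self_of_norm_sq_le_re_inner (hpos n) (hcontr n) ?_,
    fun h => tendsto_nhds_unique (hL ξ) (by simp [h])⟩
  have hform : Tendsto (fun m => re ⟪T m ξ, ξ⟫) atTop (𝓝 (re ⟪L ξ, ξ⟫)) :=
    (continuous_re.tendsto _).comp ((hL ξ).inner tendsto_const_nhds)
  calc ‖ξ‖ ^ 2 = re ⟪L ξ, ξ⟫ := by rw [hξ, inner_self_eq_norm_sq]
    _ ≤ re ⟪T n ξ, ξ⟫ :=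
      le_of_tendsto hform <|
        eventually_atTop.mpr ⟨n, fun m hm => re_inner_apply_le_of_le (hT hm) ξ⟩

theorem antitone_fixedSubmodule (hpos : ∀ n, 0 ≤ T n) (hcontr : ∀ n, T n ≤ 1)
    (hT : Antitone T) : Antitone fun n => (T n).fixedSubmodule := fun n _ h _ hξ =>
  mem_fixedSubmodule.mpr <|
    apply_eq_self_of_le (hpos n) (hcontr n) (hT h) (mem_fixedSubmodule.mp hξ)

end ContinuousLinearMap

open ContinuousLinearMap

theorem stmt5_general
    (T : ℕ → H →L[ℂ] H) (hpos : ∀ n, 0 ≤ T n) (hcontr : ∀ n, T n ≤ 1)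
    (hmono : ∀ n, T (n + 1) ≤ T n)
    (P : ℕ → H →L[ℂ] H) (hP : ∀ n, IsIdempotentElem (P n))
    (hPsa : ∀ n, IsSelfAdjoint (P n)) (hPfix : ∀ n, ∀ ξ : H, P n ξ = ξ ↔ T n ξ = ξ) :
    ∃ Tlim : H →L[ℂ] H, (∀ ξ : H, Tendsto (fun n => T n ξ) atTop (nhds (Tlim ξ))) ∧
      ∀ Plim : H →L[ℂ] H, IsIdempotentElem Plim → IsSelfAdjoint Plim →
        (∀ ξ : H, Plim ξ = ξ ↔ Tlim ξ = ξ) →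
        ∀ ξ : H, Tendsto (fun n => P n ξ) atTop (nhds (Plim ξ)) := by
  have hT : Antitone T := antitone_nat_of_succ_le hmono
  obtain ⟨L, hL⟩ := exists_tendsto_apply_of_antitone hpos hcontr hT
  refine ⟨L, hL, fun Pl hPl hPlsa hPlfix ξ => ?_⟩
  have hPn : ∀ n, P n = (T n).fixedSubmodule.starProjection := fun n =>
    IsStarProjection.eq_starProjection_of_forall_mem_iff ⟨hP n, hPsa n⟩ _
      fun x => by rw [mem_fixedSubmodule, hPfix]
  have hPl : Pl = (⨅ n, (T n).fixedSubmodule).starProjection :=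
    IsStarProjection.eq_starProjection_of_forall_mem_iff ⟨hPl, hPlsa⟩ _ fun x => by
      simp only [Submodule.mem_iInf, mem_fixedSubmodule, hPlfix,
        apply_eq_self_iff_forall_of_tendsto hpos hcontr hT hL]
  simpa only [hPn, hPl] using
    starProjection_tendsto_iInf _ (antitone_fixedSubmodule hpos hcontr hT) ξ

theorem stmt5 [TopologicalSpace.SeparableSpace H]
    (T : ℕ → H →L[ℂ] H) (hpos : ∀ n, 0 ≤ T n) (hcontr : ∀ n, T n ≤ 1)
    (hmono : ∀ n, T (n + 1) ≤ T n)
    (P : ℕ → H →L[ℂ] H) (hP : ∀ n, IsIdempotentElem (P n))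
    (hPsa : ∀ n, IsSelfAdjoint (P n)) (hPfix : ∀ n, ∀ ξ : H, P n ξ = ξ ↔ T n ξ = ξ) :
    ∃ Tlim : H →L[ℂ] H, (∀ ξ : H, Tendsto (fun n => T n ξ) atTop (nhds (Tlim ξ))) ∧
      ∀ Plim : H →L[ℂ] H, IsIdempotentElem Plim → IsSelfAdjoint Plim →
        (∀ ξ : H, Plim ξ = ξ ↔ Tlim ξ = ξ) →
        ∀ ξ : H, Tendsto (fun n => P n ξ) atTop (nhds (Plim ξ)) :=
  stmt5_general T hpos hcontr hmono P hP hPsa hPfix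
end
end

section
/- Let T₁ ≥ T₂ ≥ ⋯ be a non-increasing sequence of positive contractions on a Hilbert space H, with T = lim_n T_n (strong limit) and P the projection onto the fixed-point space of T. Setting S_n = T_n T_{n-1} ⋯ T₁, the adjoints S_n* converge strongly to P: for every ξ ∈ H, ‖S_n* ξ − Pξ‖ → 0. -/
/-!
The strong limit `T` is again a positive contraction, and `T ≤ Tₙ`. Since a positive contraction
`B` satisfies `‖B x‖² ≤ re ⟪B x, x⟫`, every fixed vector of `T` is then fixed by every `Tₙ`, so
`P Sₙ* = P` and `‖Sₙ* ξ - P ξ‖² = ‖Sₙ* ξ‖² - ‖P ξ‖²`. Writing `S*ₙ₊ₖ = Sₙ* Tₙ₊₁ ⋯ Tₙ₊ₖ` with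
`‖Sₙ*‖ ≤ 1` gives `limsup ‖Sₘ* ξ‖ ≤ ‖Tᵏ ξ‖` for every `k`, and `Tᵏ ξ → P ξ`: the numbers
`re ⟪Tʲ ξ, ξ⟫` decrease, which makes `(Tᵏ ξ)` a Cauchy sequence.
-/

open Filter Topology

noncomputable section

local notation "⟪" x ", " y "⟫" => @inner ℂ _ _ x y

variable {H : Type*} [NormedAddCommGroup H] [InnerProductSpace ℂ H] [CompleteSpace H]

section RecursiveProducts

variable {M : Type*} {Q R : ℕ → M}

theorem eq_mul_prod_ofFn_of_succ_eq_mul [Monoid M] (hQ : ∀ n, Q (n + 1) = Q n * R (n + 1))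
    (n k : ℕ) : Q (n + k) = Q n * (List.ofFn fun i : Fin k => R (n + i + 1)).prod := by
  induction k with
  | zero => simp
  | succ k ih =>
    rw [← add_assoc, hQ, ih, List.ofFn_succ', List.prod_concat, mul_assoc]
    simp

theorem mul_eq_left_of_succ_eq_mul [Monoid M] (hQ0 : Q 0 = R 0)
    (hQ : ∀ n, Q (n + 1) = Q n * R (n + 1)) {P : M} (hP : ∀ n, P * R n = P) (n : ℕ) :
    P * Q n = P := by
  induction n with
  | zero => rw [hQ0, hP]
  | succ n ih => rw [hQ, ← mul_assoc, ih, hP]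

theorem norm_le_one_of_succ_eq_mul [SeminormedRing M] (hQ0 : Q 0 = R 0)
    (hQ : ∀ n, Q (n + 1) = Q n * R (n + 1)) (hR : ∀ n, ‖R n‖ ≤ 1) (n : ℕ) : ‖Q n‖ ≤ 1 := by
  induction n with
  | zero => rw [hQ0]; exact hR 0
  | succ n ih => rw [hQ]; exact (norm_mul_le _ _).trans (mul_le_one₀ ih (norm_nonneg _) (hR _))

end RecursiveProducts

section NormedSpace

variable {𝕜 E : Type*} [NontriviallyNormedField 𝕜] [NormedAddCommGroup E] [NormedSpace 𝕜 E]

theorem tendsto_apply_of_tendsto_of_norm_le {ι : Type*} {l : Filter ι}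
    {A : ι → E →L[𝕜] E} {B : E →L[𝕜] E} {C : ℝ}
    (hA : ∀ x, Tendsto (fun i => A i x) l (𝓝 (B x))) (hC : ∀ i, ‖A i‖ ≤ C)
    {y : ι → E} {z : E} (hy : Tendsto y l (𝓝 z)) :
    Tendsto (fun i => A i (y i)) l (𝓝 (B z)) := by
  rw [tendsto_iff_norm_sub_tendsto_zero] at hy ⊢
  have hbound : ∀ i, ‖A i (y i) - B z‖ ≤ C * ‖y i - z‖ + ‖A i z - B z‖ := fun i =>
    calc ‖A i (y i) - B z‖ = ‖A i (y i - z) + (A i z - B z)‖ := by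
          rw [map_sub]; abel_nf
      _ ≤ C * ‖y i - z‖ + ‖A i z - B z‖ :=
          (norm_add_le _ _).trans (add_le_add_left ((A i).le_of_opNorm_le (hC i) _) _)
  have hlim : Tendsto (fun i => C * ‖y i - z‖ + ‖A i z - B z‖) l (𝓝 0) := by
    simpa using (hy.const_mul C).add (tendsto_iff_norm_sub_tendsto_zero.1 (hA z))
  exact squeeze_zero (fun _ => norm_nonneg _) hbound hlim

theorem tendsto_prod_ofFn_apply {A : ℕ → E →L[𝕜] E} {B : E →L[𝕜] E} {C : ℝ}
    (hA : ∀ x, Tendsto (fun n => A n x) atTop (𝓝 (B x))) (hC : ∀ n, ‖A n‖ ≤ C) (k : ℕ) (x : E) :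
    Tendsto (fun n => (List.ofFn fun i : Fin k => A (n + i)).prod x) atTop (𝓝 ((B ^ k) x)) := by
  induction k with
  | zero => simp
  | succ k ih =>
    simp only [List.ofFn_succ, List.prod_cons, Fin.val_zero, add_zero, Fin.val_succ,
      mul_apply_eq_comp, pow_succ']
    refine tendsto_apply_of_tendsto_of_norm_le hA hC ?_
    simpa only [Function.comp_def, add_assoc, Nat.add_comm 1] using
      ih.comp (tendsto_add_atTop_nat 1)

theorem tendsto_norm_apply_of_succ_eq_mul {Q R : ℕ → E →L[𝕜] E} {A : E →L[𝕜] E} {x : E} {L : ℝ}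
    (hQ : ∀ n, Q (n + 1) = Q n * R (n + 1)) (hQ1 : ∀ n, ‖Q n‖ ≤ 1) (hR1 : ∀ n, ‖R n‖ ≤ 1)
    (hR : ∀ y, Tendsto (fun n => R n y) atTop (𝓝 (A y)))
    (hpow : Tendsto (fun k => ‖(A ^ k) x‖) atTop (𝓝 L)) (hL : ∀ n, L ≤ ‖Q n x‖) :
    Tendsto (fun n => ‖Q n x‖) atTop (𝓝 L) := by
  refine tendsto_order.2 ⟨fun a ha => .of_forall fun n => ha.trans_le (hL n), fun a ha => ?_⟩
  obtain ⟨k, hk⟩ := (hpow.eventually (gt_mem_nhds ha)).exists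
  have hprod := tendsto_prod_ofFn_apply (A := fun n => R (n + 1))
    (fun y => (hR y).comp (tendsto_add_atTop_nat 1)) (fun n => hR1 (n + 1)) k x
  have hshift : ∀ᶠ n in atTop, ‖Q (n + k) x‖ < a :=
    (hprod.norm.eventually (gt_mem_nhds hk)).mono fun n hn => by
      rw [eq_mul_prod_ofFn_of_succ_eq_mul hQ, mul_apply_eq_comp]
      exact ((Q n).le_of_opNorm_le (hQ1 n) _).trans_lt (by simpa using hn)
  rw [← map_add_atTop_eq_nat k]
  exact hshift

theorem ContinuousLinearMap.mul_eq_right_of_forall_apply_eq_self {P B : E →L[𝕜] E}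
    (hP : IsIdempotentElem P) (hB : ∀ x, P x = x → B x = x) : B * P = P :=
  ContinuousLinearMap.ext fun x => hB (P x) (by rw [← mul_apply_eq_comp, hP.eq])

end NormedSpace

section InnerProductSpace

open RCLike ContinuousLinearMap

variable {𝕜 E : Type*} [RCLike 𝕜] [NormedAddCommGroup E] [InnerProductSpace 𝕜 E]

theorem ContinuousLinearMap.IsPositive.of_tendsto_apply {ι : Type*} {l : Filter ι} [l.NeBot]
    {A : ι → E →L[𝕜] E} {B : E →L[𝕜] E} (hA : ∀ x, Tendsto (fun i => A i x) l (𝓝 (B x)))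
    (hpos : ∀ᶠ i in l, (A i).IsPositive) : B.IsPositive := by
  refine ⟨fun x y => ?_, fun x => ?_⟩
  · have hleft : Tendsto (fun i => inner 𝕜 (A i x) y) l (𝓝 (inner 𝕜 (B x) y)) :=
      (hA x).inner tendsto_const_nhds
    have hright : Tendsto (fun i => inner 𝕜 x (A i y)) l (𝓝 (inner 𝕜 x (B y))) :=
      tendsto_const_nhds.inner (hA y)
    exact tendsto_nhds_unique (hleft.congr' (hpos.mono fun i hi => hi.isSymmetric x y)) hright
  · rw [reApplyInnerSelf_apply]
    exact ge_of_tendsto ((continuous_re.tendsto _).comp ((hA x).inner tendsto_const_nhds))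
      (hpos.mono fun i hi => hi.re_inner_nonneg_left x)

theorem ContinuousLinearMap.le_of_tendsto_apply {ι : Type*} {l : Filter ι} [l.NeBot]
    {A B : ι → E →L[𝕜] E} {A' B' : E →L[𝕜] E}
    (hA : ∀ x, Tendsto (fun i => A i x) l (𝓝 (A' x)))
    (hB : ∀ x, Tendsto (fun i => B i x) l (𝓝 (B' x))) (hle : ∀ᶠ i in l, A i ≤ B i) : A' ≤ B' :=
  IsPositive.of_tendsto_apply (fun x => (hB x).sub (hA x)) hle

theorem ContinuousLinearMap.re_inner_apply_le_of_le_s6 {A B : E →L[𝕜] E} (h : A ≤ B) (x : E) :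
    re (inner 𝕜 (A x) x) ≤ re (inner 𝕜 (B x) x) := by
  have := h.re_inner_nonneg_left x
  rwa [sub_apply, inner_sub_left, map_sub, sub_nonneg] at this

variable [CompleteSpace E]

theorem ContinuousLinearMap.inner_pow_apply_pow_apply {A : E →L[𝕜] E} (hA : IsSelfAdjoint A)
    (k m : ℕ) (x : E) : inner 𝕜 ((A ^ k) x) ((A ^ m) x) = inner 𝕜 ((A ^ (m + k)) x) x := by
  calc inner 𝕜 ((A ^ k) x) ((A ^ m) x) = inner 𝕜 ((A ^ m) ((A ^ k) x)) x :=
        ((hA.pow m).isSymmetric _ _).symm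
    _ = inner 𝕜 ((A ^ (m + k)) x) x := by rw [pow_add, mul_apply_eq_comp]

theorem IsStarProjection.mul_eq_left_of_forall_apply_eq_self {P B : E →L[𝕜] E}
    (hP : IsStarProjection P) (hB : IsSelfAdjoint B) (hfix : ∀ x, P x = x → B x = x) :
    P * B = P := by
  simpa [hP.isSelfAdjoint.star_eq, hB.star_eq] using
    congrArg star (mul_eq_right_of_forall_apply_eq_self hP.isIdempotentElem hfix)

theorem IsStarProjection.norm_sub_sq_of_apply_eq {P : E →L[𝕜] E} (hP : IsStarProjection P)
    {x y : E} (h : P y = P x) : ‖y - P x‖ ^ 2 = ‖y‖ ^ 2 - ‖P x‖ ^ 2 := by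
  have hinner : inner 𝕜 y (P x) = inner 𝕜 (P x) (P x) :=
    calc inner 𝕜 y (P x) = inner 𝕜 y (P (P x)) := by
          rw [← mul_apply_eq_comp, hP.isIdempotentElem.eq]
      _ = inner 𝕜 (P y) (P x) := (hP.isSelfAdjoint.isSymmetric y (P x)).symm
      _ = inner 𝕜 (P x) (P x) := by rw [h]
  rw [@norm_sub_sq 𝕜, hinner, inner_self_eq_norm_sq]
  ring

theorem IsStarProjection.norm_le_of_apply_eq {P : E →L[𝕜] E} (hP : IsStarProjection P)
    {x y : E} (h : P y = P x) : ‖P x‖ ≤ ‖y‖ :=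
  h ▸ (P.le_of_opNorm_le (hP.norm_le P) y).trans_eq (one_mul _)

theorem IsStarProjection.tendsto_of_tendsto_norm {ι : Type*} {l : Filter ι} {P : E →L[𝕜] E}
    (hP : IsStarProjection P) {x : E} {y : ι → E} (hy : ∀ i, P (y i) = P x)
    (hnorm : Tendsto (fun i => ‖y i‖) l (𝓝 ‖P x‖)) : Tendsto y l (𝓝 (P x)) := by
  rw [tendsto_iff_norm_sub_tendsto_zero]
  have hsq : Tendsto (fun i => ‖y i‖ ^ 2 - ‖P x‖ ^ 2) l (𝓝 0) :=
    tendsto_sub_nhds_zero_iff.2 (hnorm.pow 2)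
  have hsqrt := (Real.continuous_sqrt.tendsto 0).comp hsq
  simp only [Real.sqrt_zero, Function.comp_def] at hsqrt
  convert hsqrt using 2 with i
  rw [← hP.norm_sub_sq_of_apply_eq (hy i), Real.sqrt_sq (norm_nonneg _)]

end InnerProductSpace

section PositiveContraction

open RCLike ContinuousLinearMap

variable {A B : H →L[ℂ] H}

theorem ContinuousLinearMap.norm_apply_sq_le_re_inner_s6 (h0 : 0 ≤ B) (h1 : B ≤ 1) (x : H) :
    ‖B x‖ ^ 2 ≤ re ⟪B x, x⟫ := by
  have hsq : B ^ 2 ≤ B := by simpa using CStarAlgebra.pow_antitone h0 h1 one_le_two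
  calc ‖B x‖ ^ 2 = re ⟪B x, B x⟫ := (inner_self_eq_norm_sq _).symm
    _ = re ⟪(B ^ 2) x, x⟫ := by
        rw [sq, mul_apply_eq_comp]
        exact congrArg re ((IsSelfAdjoint.of_nonneg h0).isSymmetric (B x) x).symm
    _ ≤ re ⟪B x, x⟫ := re_inner_apply_le_of_le_s6 hsq x

theorem ContinuousLinearMap.apply_eq_self_of_le_s6 (hAB : A ≤ B) (h0 : 0 ≤ B) (h1 : B ≤ 1) {x : H}
    (hx : A x = x) : B x = x := by
  have hlow := re_inner_apply_le_of_le_s6 hAB x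
  have hup := re_inner_apply_le_of_le_s6 h1 x
  rw [hx, inner_self_eq_norm_sq] at hlow
  rw [one_apply_eq_self, inner_self_eq_norm_sq] at hup
  have hsq : ‖B x - x‖ ^ 2 ≤ 0 := by
    rw [norm_sub_sq (𝕜 := ℂ)]
    linarith [norm_apply_sq_le_re_inner_s6 h0 h1 x]
  simpa [sub_eq_zero] using hsq

theorem ContinuousLinearMap.cauchySeq_pow_apply (h0 : 0 ≤ A) (h1 : A ≤ 1) (x : H) :
    CauchySeq fun k => (A ^ k) x := by
  set b : ℕ → ℝ := fun j => re ⟪(A ^ j) x, x⟫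
  have hb : Antitone b := fun j m hjm =>
    re_inner_apply_le_of_le_s6 (CStarAlgebra.pow_antitone h0 h1 hjm) x
  have hb0 : ∀ j, 0 ≤ b j := fun j =>
    ((nonneg_iff_isPositive _).1 (CStarAlgebra.pow_nonneg h0 j)).re_inner_nonneg_left x
  obtain ⟨c, hc⟩ : ∃ c, Tendsto b atTop (𝓝 c) :=
    ⟨_, tendsto_atTop_ciInf hb ⟨0, Set.forall_mem_range.2 hb0⟩⟩
  have hA := IsSelfAdjoint.of_nonneg h0
  have hdist : ∀ n m, n ≤ m → dist ((A ^ n) x) ((A ^ m) x) ^ 2 ≤ b (n + n) - c := by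
    intro n m hnm
    have hnorm : ∀ k, ‖(A ^ k) x‖ ^ 2 = b (k + k) := fun k => by
      rw [← inner_self_eq_norm_sq (𝕜 := ℂ), inner_pow_apply_pow_apply hA]
    rw [dist_eq_norm, norm_sub_sq (𝕜 := ℂ), hnorm, hnorm, inner_pow_apply_pow_apply hA]
    linarith [hb (by omega : m + n ≤ m + m), hb.le_of_tendsto hc (m + m)]
  refine cauchySeq_of_le_tendsto_0' (fun n => √(b (n + n) - c))
    (fun n m hnm => Real.le_sqrt_of_sq_le (hdist n m hnm)) ?_
  have hdiag := hc.comp (tendsto_atTop_mono (fun n => Nat.le_add_right n n) tendsto_id)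
  simpa [Function.comp_def] using
    (Real.continuous_sqrt.tendsto 0).comp (tendsto_sub_nhds_zero_iff.2 hdiag)

theorem ContinuousLinearMap.tendsto_pow_apply (h0 : 0 ≤ A) (h1 : A ≤ 1) {P : H →L[ℂ] H}
    (hP : IsStarProjection P) (hPfix : ∀ x, P x = x ↔ A x = x) (x : H) :
    Tendsto (fun k => (A ^ k) x) atTop (𝓝 (P x)) := by
  obtain ⟨y, hy⟩ := cauchySeq_tendsto_of_complete (cauchySeq_pow_apply h0 h1 x)
  have hAy : A y = y := by
    refine tendsto_nhds_unique ((A.continuous.tendsto y).comp hy) ?_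
    simpa only [Function.comp_def, ← mul_apply_eq_comp, ← pow_succ'] using
      hy.comp (tendsto_add_atTop_nat 1)
  have hPA : P * A = P := hP.mul_eq_left_of_forall_apply_eq_self (.of_nonneg h0)
    fun z hz => (hPfix z).1 hz
  have hPpow : ∀ k, P ((A ^ k) x) = P x := by
    intro k
    induction k with
    | zero => rfl
    | succ k ih => rw [pow_succ', mul_apply_eq_comp, ← mul_apply_eq_comp P, hPA, ih]
  have hPy : P y = P x := tendsto_nhds_unique ((P.continuous.tendsto y).comp hy)
    (by simpa only [Function.comp_def, hPpow] using tendsto_const_nhds)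
  rwa [← hPy, (hPfix y).2 hAy]

end PositiveContraction

theorem stmt6_general
    (T : ℕ → H →L[ℂ] H) (hpos : ∀ n, 0 ≤ T n) (hcontr : ∀ n, T n ≤ 1)
    (hmono : ∀ n, T (n + 1) ≤ T n)
    (S : ℕ → H →L[ℂ] H) (hS0 : S 0 = T 0) (hSsucc : ∀ n, S (n + 1) = T (n + 1) ∘L S n)
    (Tlim : H →L[ℂ] H) (hTlim : ∀ ξ : H, Tendsto (fun n => T n ξ) atTop (nhds (Tlim ξ)))
    (P : H →L[ℂ] H) (hP : IsIdempotentElem P) (hPsa : IsSelfAdjoint P)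
    (hPfix : ∀ ξ : H, P ξ = ξ ↔ Tlim ξ = ξ) :
    ∀ ξ : H, Tendsto (fun n => ‖ContinuousLinearMap.adjoint (S n) ξ - P ξ‖) atTop (nhds 0) := by
  intro ξ
  have hPproj : IsStarProjection P := ⟨hP, hPsa⟩
  have hT1 : ∀ n, ‖T n‖ ≤ 1 := fun n =>
    (CStarAlgebra.norm_le_one_iff_of_nonneg _ (hpos n)).2 (hcontr n)
  have hTsa : ∀ n, IsSelfAdjoint (T n) := fun n => .of_nonneg (hpos n)
  have hTlim0 : 0 ≤ Tlim :=
    ContinuousLinearMap.le_of_tendsto_apply (fun _ => tendsto_const_nhds) hTlim (.of_forall hpos)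
  have hTlim1 : Tlim ≤ 1 :=
    ContinuousLinearMap.le_of_tendsto_apply hTlim (fun _ => tendsto_const_nhds) (.of_forall hcontr)
  have hTlimT (n : ℕ) : Tlim ≤ T n :=
    ContinuousLinearMap.le_of_tendsto_apply hTlim (fun _ => tendsto_const_nhds)
      (eventually_atTop.2 ⟨n, fun m hm => antitone_nat_of_succ_le hmono hm⟩)
  have hPT (n : ℕ) : P * T n = P :=
    hPproj.mul_eq_left_of_forall_apply_eq_self (hTsa n) fun x hx =>
      ContinuousLinearMap.apply_eq_self_of_le_s6 (hTlimT n) (hpos n) (hcontr n) ((hPfix x).1 hx)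
  set Q : ℕ → H →L[ℂ] H := fun n => ContinuousLinearMap.adjoint (S n)
  have hQ0 : Q 0 = T 0 := by simp only [Q, hS0, (hTsa 0).adjoint_eq]
  have hQ (n : ℕ) : Q (n + 1) = Q n * T (n + 1) := by
    simp only [Q, hSsucc, ContinuousLinearMap.adjoint_comp, (hTsa _).adjoint_eq,
      ContinuousLinearMap.mul_def]
  have hPQ (n : ℕ) : P (Q n ξ) = P ξ := by
    rw [← mul_apply_eq_comp, mul_eq_left_of_succ_eq_mul hQ0 hQ hPT]
  have hpow := ContinuousLinearMap.tendsto_pow_apply hTlim0 hTlim1 hPproj hPfix ξ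
  refine tendsto_iff_norm_sub_tendsto_zero.1 (hPproj.tendsto_of_tendsto_norm hPQ ?_)
  exact tendsto_norm_apply_of_succ_eq_mul hQ (norm_le_one_of_succ_eq_mul hQ0 hQ hT1) hT1 hTlim
    hpow.norm fun n => hPproj.norm_le_of_apply_eq (hPQ n)

theorem stmt6 [TopologicalSpace.SeparableSpace H]
    (T : ℕ → H →L[ℂ] H) (hpos : ∀ n, 0 ≤ T n) (hcontr : ∀ n, T n ≤ 1)
    (hmono : ∀ n, T (n + 1) ≤ T n)
    (S : ℕ → H →L[ℂ] H) (hS0 : S 0 = T 0) (hSsucc : ∀ n, S (n + 1) = T (n + 1) ∘L S n)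
    (Tlim : H →L[ℂ] H) (hTlim : ∀ ξ : H, Tendsto (fun n => T n ξ) atTop (nhds (Tlim ξ)))
    (P : H →L[ℂ] H) (hP : IsIdempotentElem P) (hPsa : IsSelfAdjoint P)
    (hPfix : ∀ ξ : H, P ξ = ξ ↔ Tlim ξ = ξ) :
    ∀ ξ : H, Tendsto (fun n => ‖ContinuousLinearMap.adjoint (S n) ξ - P ξ‖) atTop (nhds 0) :=
  stmt6_general T hpos hcontr hmono S hS0 hSsucc Tlim hTlim P hP hPsa hPfix
end
end

section
/- Let T₁ ≥ T₂ ≥ ⋯ be a non-increasing sequence of positive contractions on H, S_n = T_n ⋯ T₁, and P the projection onto the fixed-point space of the strong limit T. If ξ ∈ H is such that the set {S_n ξ : n ∈ ℕ} is totally bounded, then ‖S_n ξ − Pξ‖ → 0. -/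
/-!
The norms `‖S n ξ‖` decrease to some `c`. Let `η` be the limit of a subsequence `S (φ k) ξ`.
Since `A ^ 2 ≤ A` for `0 ≤ A ≤ 1`, for `φ k ≥ m` we get
`‖S (φ k + 1) ξ‖ ^ 2 ≤ ⟪T (φ k + 1) (S (φ k) ξ), S (φ k) ξ⟫ ≤ ⟪T m (S (φ k) ξ), S (φ k) ξ⟫`,
so `‖η‖ ^ 2 = c ^ 2 ≤ ⟪T m η, η⟫ ≤ ‖η‖ ^ 2`, which forces `T m η = η`; hence `η` is fixed by the
limit `Tlim` and `P η = η`. Conversely every fixed vector of `Tlim` is fixed by each `T m`, so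
`T m P = P`, and taking adjoints `P T m = P`; thus `P (S n ξ) = P ξ` and `η = P ξ`. By total
boundedness, a sequence whose only limit point is `P ξ` converges to it.
-/

open Filter Topology

local notation "⟪" x ", " y "⟫" => @inner ℂ _ _ x y

namespace ContinuousLinearMap

section RCLike

variable {𝕜 E : Type*} [RCLike 𝕜] [NormedAddCommGroup E] [InnerProductSpace 𝕜 E]

theorem reApplyInnerSelf_sub (A B : E →L[𝕜] E) (x : E) :
    (A - B).reApplyInnerSelf x = A.reApplyInnerSelf x - B.reApplyInnerSelf x := by
  simp only [reApplyInnerSelf_apply, sub_apply, inner_sub_left, map_sub]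

theorem reApplyInnerSelf_one (x : E) : (1 : E →L[𝕜] E).reApplyInnerSelf x = ‖x‖ ^ 2 := by
  rw [reApplyInnerSelf_apply, one_apply_eq_self, inner_self_eq_norm_sq]

theorem reApplyInnerSelf_mono {A B : E →L[𝕜] E} (h : A ≤ B) (x : E) :
    A.reApplyInnerSelf x ≤ B.reApplyInnerSelf x :=
  sub_nonneg.mp <| reApplyInnerSelf_sub B A x ▸ h.2 x

end RCLike

variable {E : Type*} [NormedAddCommGroup E] [InnerProductSpace ℂ E] [CompleteSpace E]
  {A : E →L[ℂ] E}

theorem norm_apply_sq_le_reApplyInnerSelf (h₀ : 0 ≤ A) (h₁ : A ≤ 1) (x : E) :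
    ‖A x‖ ^ 2 ≤ A.reApplyInnerSelf x :=
  calc ‖A x‖ ^ 2 = (A ^ 2).reApplyInnerSelf x := by
        rw [reApplyInnerSelf_apply, pow_two A, mul_apply_eq_comp,
          ((nonneg_iff_isPositive A).mp h₀).inner_left_eq_inner_right, inner_self_eq_norm_sq]
    _ ≤ A.reApplyInnerSelf x :=
        reApplyInnerSelf_mono (by simpa using CStarAlgebra.pow_antitone h₀ h₁ one_le_two) x

theorem apply_eq_self_of_norm_sq_le_reApplyInnerSelf (h₀ : 0 ≤ A) (h₁ : A ≤ 1) {x : E}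
    (h : ‖x‖ ^ 2 ≤ A.reApplyInnerSelf x) : A x = x := by
  -- `1 - A` is again a positive contraction, and its quadratic form vanishes at `x`.
  have key := norm_apply_sq_le_reApplyInnerSelf (sub_nonneg.mpr h₁) (sub_le_self 1 h₀) x
  rw [reApplyInnerSelf_sub, reApplyInnerSelf_one, sub_apply, one_apply_eq_self] at key
  have : ‖x - A x‖ = 0 := by nlinarith [norm_nonneg (x - A x)]
  exact (sub_eq_zero.mp (norm_eq_zero.mp this)).symm

theorem apply_eq_self_of_tendsto_of_eventually_le {ι : Type*}
    {l : Filter ι} [l.NeBot] {T : ι → E →L[ℂ] E} (h₀ : 0 ≤ A) (h₁ : A ≤ 1)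
    (hle : ∀ᶠ i in l, T i ≤ A) {x : E} (hx : Tendsto (fun i => T i x) l (𝓝 x)) : A x = x := by
  refine apply_eq_self_of_norm_sq_le_reApplyInnerSelf h₀ h₁ ?_
  have hform : Tendsto (fun i => (T i).reApplyInnerSelf x) l (𝓝 (‖x‖ ^ 2)) := by
    rw [← inner_self_eq_norm_sq (𝕜 := ℂ)]
    exact (RCLike.continuous_re.comp (continuous_id.inner continuous_const)).tendsto x |>.comp hx
  exact le_of_tendsto hform (hle.mono fun i hi => reApplyInnerSelf_mono hi x)

end ContinuousLinearMap

open ContinuousLinearMap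

section DecreasingSequence

variable {E : Type*} [NormedAddCommGroup E] [InnerProductSpace ℂ E] [CompleteSpace E]
  {T : ℕ → E →L[ℂ] E} {u : ℕ → E}

theorem antitone_norm_of_eq_apply_succ (hpos : ∀ n, 0 ≤ T n) (hcontr : ∀ n, T n ≤ 1)
    (hu : ∀ n, u (n + 1) = T (n + 1) (u n)) : Antitone fun n => ‖u n‖ := by
  refine antitone_nat_of_succ_le fun n => ?_
  have hnorm : ‖T (n + 1)‖ ≤ 1 :=
    (CStarAlgebra.norm_le_one_iff_of_nonneg _ (hpos _)).mpr (hcontr _)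
  simpa [hu] using (T (n + 1)).le_of_opNorm_le hnorm (u n)

theorem apply_eq_self_of_tendsto_comp_of_eq_apply_succ (hpos : ∀ n, 0 ≤ T n)
    (hcontr : ∀ n, T n ≤ 1) (hT : Antitone T) (hu : ∀ n, u (n + 1) = T (n + 1) (u n))
    {φ : ℕ → ℕ} (hφ : Tendsto φ atTop atTop) {η : E} (hη : Tendsto (u ∘ φ) atTop (𝓝 η))
    (m : ℕ) : T m η = η := by
  obtain ⟨c, hc⟩ : ∃ c, Tendsto (fun n => ‖u n‖) atTop (𝓝 c) :=
    ⟨_, tendsto_atTop_ciInf (antitone_norm_of_eq_apply_succ hpos hcontr hu)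
      ⟨0, Set.forall_mem_range.mpr fun _ => norm_nonneg _⟩⟩
  have hnorm : ‖η‖ = c := tendsto_nhds_unique hη.norm (hc.comp hφ)
  -- `‖u (n + 1)‖ ^ 2 ≤ ⟪T m (u n), u n⟫` for `n ≥ m`, and both sides converge along `φ`.
  have hsucc : Tendsto (fun k => ‖u (φ k + 1)‖ ^ 2) atTop (𝓝 (c ^ 2)) :=
    ((hc.comp (tendsto_add_atTop_nat 1)).comp hφ).pow 2
  have hform : Tendsto (fun k => (T m).reApplyInnerSelf (u (φ k))) atTop
      (𝓝 ((T m).reApplyInnerSelf η)) :=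
    ((T m).reApplyInnerSelf_continuous.tendsto η).comp hη
  refine apply_eq_self_of_norm_sq_le_reApplyInnerSelf (hpos m) (hcontr m) ?_
  rw [hnorm]
  refine le_of_tendsto_of_tendsto hsucc hform ?_
  filter_upwards [hφ.eventually_ge_atTop m] with k hk
  calc ‖u (φ k + 1)‖ ^ 2 = ‖T (φ k + 1) (u (φ k))‖ ^ 2 := by rw [hu]
    _ ≤ (T (φ k + 1)).reApplyInnerSelf (u (φ k)) :=
      norm_apply_sq_le_reApplyInnerSelf (hpos _) (hcontr _) _
    _ ≤ (T m).reApplyInnerSelf (u (φ k)) := reApplyInnerSelf_mono (hT (by omega)) _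

end DecreasingSequence

variable {H : Type*} [NormedAddCommGroup H] [InnerProductSpace ℂ H] [CompleteSpace H]

theorem stmt8_general
    (T : ℕ → H →L[ℂ] H) (hpos : ∀ n, 0 ≤ T n) (hcontr : ∀ n, T n ≤ 1)
    (hmono : ∀ n, T (n + 1) ≤ T n)
    (S : ℕ → H →L[ℂ] H) (hS0 : S 0 = T 0) (hSsucc : ∀ n, S (n + 1) = T (n + 1) ∘L S n)
    (Tlim : H →L[ℂ] H) (hTlim : ∀ ξ : H, Tendsto (fun n => T n ξ) atTop (nhds (Tlim ξ)))
    (P : H →L[ℂ] H) (hP : IsIdempotentElem P) (hPsa : IsSelfAdjoint P)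
    (hPfix : ∀ ξ : H, P ξ = ξ ↔ Tlim ξ = ξ)
    (ξ : H) (hξ : TotallyBounded (Set.range fun n => S n ξ)) :
    Tendsto (fun n => ‖S n ξ - P ξ‖) atTop (nhds 0) := by
  have hT : Antitone T := antitone_nat_of_succ_le hmono
  have hfix : ∀ x, Tlim x = x → ∀ m, T m x = x := fun x hx m =>
    apply_eq_self_of_tendsto_of_eventually_le (hpos m) (hcontr m)
      (eventually_ge_atTop m |>.mono fun _ hn => hT hn) (by simpa [hx] using hTlim x)
  have hPT : ∀ m, P * T m = P := fun m => by
    have hTP : T m * P = P := ext fun x =>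
      hfix (P x) ((hPfix _).mp (congrArg (· x) hP)) m
    simpa [hPsa.star_eq, (IsSelfAdjoint.of_nonneg (hpos m)).star_eq] using congrArg star hTP
  have hPS : ∀ n, P (S n ξ) = P ξ := by
    intro n
    induction n with
    | zero => rw [hS0, ← mul_apply_eq_comp, hPT]
    | succ n ih => rw [hSsucc, comp_apply, ← mul_apply_eq_comp, hPT, ih]
  have hK : IsCompact (closure (Set.range fun n => S n ξ)) :=
    hξ.closure.isCompact_of_isClosed isClosed_closure
  refine tendsto_iff_norm_sub_tendsto_zero.mp <| hK.tendsto_nhds_of_unique_mapClusterPt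
    (.of_forall fun n => subset_closure ⟨n, rfl⟩) fun η _ hη => ?_
  obtain ⟨φ, hφ, hlim⟩ := hη.tendsto_subseq
  have hηfix : ∀ m, T m η = η := apply_eq_self_of_tendsto_comp_of_eq_apply_succ hpos hcontr hT
    (u := fun n => S n ξ) (fun n => by simp [hSsucc]) hφ.tendsto_atTop hlim
  have hPη : P η = η := (hPfix η).mpr <| tendsto_nhds_unique (hTlim η) (by simp [hηfix])
  calc η = P η := hPη.symm
    _ = P ξ := tendsto_nhds_unique ((P.continuous.tendsto η).comp hlim)
      (by simp [Function.comp_def, hPS])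

theorem stmt8 [TopologicalSpace.SeparableSpace H]
    (T : ℕ → H →L[ℂ] H) (hpos : ∀ n, 0 ≤ T n) (hcontr : ∀ n, T n ≤ 1)
    (hmono : ∀ n, T (n + 1) ≤ T n)
    (S : ℕ → H →L[ℂ] H) (hS0 : S 0 = T 0) (hSsucc : ∀ n, S (n + 1) = T (n + 1) ∘L S n)
    (Tlim : H →L[ℂ] H) (hTlim : ∀ ξ : H, Tendsto (fun n => T n ξ) atTop (nhds (Tlim ξ)))
    (P : H →L[ℂ] H) (hP : IsIdempotentElem P) (hPsa : IsSelfAdjoint P)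
    (hPfix : ∀ ξ : H, P ξ = ξ ↔ Tlim ξ = ξ)
    (ξ : H) (hξ : TotallyBounded (Set.range fun n => S n ξ)) :
    Tendsto (fun n => ‖S n ξ - P ξ‖) atTop (nhds 0) :=
  stmt8_general T hpos hcontr hmono S hS0 hSsucc Tlim hTlim P hP hPsa hPfix ξ hξ
end

section
/- Let T₁ ≥ T₂ ≥ ⋯ be a non-increasing sequence of positive contractions on a Hilbert space H and S_n = T_n ⋯ T₁. Then for every ξ ∈ H and every k ∈ ℕ, ‖S_{n+k} ξ − S_n ξ‖ → 0 as n → ∞. -/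
/-! For a positive contraction `A`, `A² ≤ A` gives `‖A x‖² ≤ re ⟪A x, x⟫`, hence
`‖A x - x‖² + ‖A x‖² ≤ ‖x‖²`. Along the orbit `x_n = S_n ξ` the squared norms therefore decrease,
and the decrement dominates `‖x_{n+1} - x_n‖²`; since `‖x_n‖²` converges, consecutive differences
tend to `0`, and so do differences at any fixed distance `k`. -/

open Filter Topology

noncomputable section

local notation "⟪" x ", " y "⟫" => @inner ℂ _ _ x y

variable {H : Type*} [NormedAddCommGroup H] [InnerProductSpace ℂ H] [CompleteSpace H]

open ContinuousLinearMap

section PositiveContraction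

variable {A : H →L[ℂ] H}

theorem norm_sq_apply_le_re_inner_apply_self (h₀ : 0 ≤ A) (h₁ : A ≤ 1) (x : H) :
    ‖A x‖ ^ 2 ≤ RCLike.re ⟪A x, x⟫ := by
  have hsq : A ^ 2 ≤ A := by simpa using CStarAlgebra.pow_antitone h₀ h₁ one_le_two
  have hsymm := ((nonneg_iff_isPositive A).mp h₀).isSymmetric
  have := ((le_def _ _).mp hsq).re_inner_nonneg_left x
  rw [sub_apply, inner_sub_left, map_sub, pow_two, mul_apply_eq_comp,
    show ⟪A (A x), x⟫ = ⟪A x, A x⟫ from hsymm (A x) x,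
    inner_self_eq_norm_sq] at this
  linarith

theorem norm_apply_sub_sq_add_norm_apply_sq_le (h₀ : 0 ≤ A) (h₁ : A ≤ 1) (x : H) :
    ‖A x - x‖ ^ 2 + ‖A x‖ ^ 2 ≤ ‖x‖ ^ 2 := by
  have := norm_sq_apply_le_re_inner_apply_self h₀ h₁ x
  rw [@norm_sub_sq ℂ]
  linarith

end PositiveContraction

theorem tendsto_sub_succ_of_norm_sub_sq_add_norm_sq_le {E : Type*} [SeminormedAddCommGroup E]
    {x : ℕ → E} (h : ∀ n, ‖x (n + 1) - x n‖ ^ 2 + ‖x (n + 1)‖ ^ 2 ≤ ‖x n‖ ^ 2) :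
    Tendsto (fun n => x (n + 1) - x n) atTop (𝓝 0) := by
  set b : ℕ → ℝ := fun n => ‖x n‖ ^ 2
  have hb : Tendsto b atTop (𝓝 (⨅ n, b n)) :=
    tendsto_atTop_ciInf (antitone_nat_of_succ_le fun n => by nlinarith [h n])
      ⟨0, by rintro _ ⟨n, rfl⟩; positivity⟩
  have hsq : Tendsto (fun n => ‖x (n + 1) - x n‖ ^ 2) atTop (𝓝 0) := by
    refine squeeze_zero (g := fun n => b n - b (n + 1)) (fun n => by positivity)
      (fun n => by linarith [h n]) ?_
    simpa using hb.sub (hb.comp (tendsto_add_atTop_nat 1))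
  rw [tendsto_zero_iff_norm_tendsto_zero]
  simpa using hsq.sqrt

theorem Filter.Tendsto.sub_add_nat_of_sub_succ {G : Type*} [AddCommGroup G] [TopologicalSpace G]
    [IsTopologicalAddGroup G] {x : ℕ → G} (h : Tendsto (fun n => x (n + 1) - x n) atTop (𝓝 0))
    (k : ℕ) : Tendsto (fun n => x (n + k) - x n) atTop (𝓝 0) := by
  induction k with
  | zero => simpa using tendsto_const_nhds
  | succ k ih =>
    simpa [Function.comp_def, add_assoc, ← add_assoc] using
      (h.comp (tendsto_add_atTop_nat k)).add ih

theorem stmt9_general (T : ℕ → H →L[ℂ] H) (hpos : ∀ n, 0 ≤ T n) (hcontr : ∀ n, T n ≤ 1)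
    (S : ℕ → H →L[ℂ] H) (hSsucc : ∀ n, S (n + 1) = T (n + 1) ∘L S n) :
    ∀ (ξ : H) (k : ℕ), Tendsto (fun n => ‖S (n + k) ξ - S n ξ‖) atTop (nhds 0) := by
  intro ξ k
  let x : ℕ → H := fun n => S n ξ
  have hstep : ∀ n, ‖x (n + 1) - x n‖ ^ 2 + ‖x (n + 1)‖ ^ 2 ≤ ‖x n‖ ^ 2 := fun n => by
    simpa [x, hSsucc] using norm_apply_sub_sq_add_norm_apply_sq_le (hpos (n + 1)) (hcontr _) (x n)
  rw [← tendsto_zero_iff_norm_tendsto_zero]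
  exact (tendsto_sub_succ_of_norm_sub_sq_add_norm_sq_le hstep).sub_add_nat_of_sub_succ k

theorem stmt9 (T : ℕ → H →L[ℂ] H) (hpos : ∀ n, 0 ≤ T n) (hcontr : ∀ n, T n ≤ 1)
    (hmono : ∀ n, T (n + 1) ≤ T n)
    (S : ℕ → H →L[ℂ] H) (hS0 : S 0 = T 0) (hSsucc : ∀ n, S (n + 1) = T (n + 1) ∘L S n) :
    ∀ (ξ : H) (k : ℕ), Tendsto (fun n => ‖S (n + k) ξ - S n ξ‖) atTop (nhds 0) :=
  stmt9_general T hpos hcontr S hSsucc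
end
end

section
/- Let T, T′ be positive contractions on H with T′ ≤ T. Suppose δ ∈ (0,1) satisfies σ(T) ∩ (1−δ, 1) = ∅ and σ(T′) ∩ (1−δ, 1) ≠ ∅. Then the projection P′ onto the fixed-point space of T′ is strictly smaller than the projection P onto the fixed-point space of T (P′ ≤ P and P′ ≠ P). -/
/-! Since `0 ≤ 1 - T ≤ 1 - T'`, every fixed vector of `T'` is fixed by `T`, whence `P' ≤ P`.
Suppose `P' = P`. The spectral gap of `T` makes the spectral projection `Q` of `T` at `1` a
continuous function of `T`, with `Q ≤ P` and `δ (1 - Q) ≤ 1 - T`; hence `T' - P ≤ T - P ≤ 1 - δ`.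
Since `T' = P + (T' - P)` with `(T' - P) P = 0`, every spectral value of `T'` other than `0` and `1`
is a spectral value of `T' - P`, hence at most `1 - δ`: this contradicts `σ(T') ∩ (1 - δ, 1) ≠ ∅`. -/

section CStarAlgebra

variable {A : Type*} [CStarAlgebra A] [PartialOrder A] [StarOrderedRing A]

theorem mul_eq_zero_of_le_of_mul_eq_zero {a c x : A} (ha : 0 ≤ a) (hac : a ≤ c)
    (hcx : c * x = 0) : a * x = 0 := by
  have hconj : star x * a * x = 0 := by
    refine le_antisymm ?_ (star_left_conjugate_nonneg ha x)
    simpa [mul_assoc, hcx] using star_left_conjugate_le_conjugate hac x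
  have hsqrt : CFC.sqrt a * x = 0 := by
    rw [← CStarRing.star_mul_self_eq_zero_iff, star_mul, (CFC.sqrt_nonneg a).isSelfAdjoint.star_eq,
      mul_assoc, ← mul_assoc (CFC.sqrt a), CFC.sqrt_mul_sqrt_self a, ← mul_assoc, hconj]
  rw [← CFC.sqrt_mul_sqrt_self a, mul_assoc, hsqrt, mul_zero]

theorem mul_eq_right_of_le_of_le_one {a b q : A} (hba : b ≤ a) (ha : a ≤ 1) (hbq : b * q = q) :
    a * q = q := by
  have h := mul_eq_zero_of_le_of_mul_eq_zero (sub_nonneg.2 ha) (sub_le_sub_left hba 1)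
    (by rw [sub_mul, one_mul, hbq, sub_self])
  rwa [sub_mul, one_mul, sub_eq_zero, eq_comm] at h

theorem IsStarProjection.sub_le_algebraMap_of_smul_one_sub_le {a p : A} (hp : IsStarProjection p)
    {δ : ℝ} (hδ : δ ≤ 1) (h : δ • (1 - p) ≤ 1 - a) : a - p ≤ algebraMap ℝ A (1 - δ) := calc
  a - p ≤ (1 - δ) • (1 - p) := by
    rw [← sub_nonneg] at h ⊢
    convert h using 1
    module
  _ ≤ (1 - δ) • 1 := smul_le_smul_of_nonneg_left (sub_le_self _ hp.nonneg) (sub_nonneg.2 hδ)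
  _ = algebraMap ℝ A (1 - δ) := (Algebra.algebraMap_eq_smul_one _).symm

theorem IsSelfAdjoint.exists_isStarProjection_of_spectrum_gap {a : A} (ha : IsSelfAdjoint a)
    {δ : ℝ} (hδ : 0 < δ) (hgap : ∀ x ∈ spectrum ℝ a, x ≤ 1 - δ ∨ x = 1) :
    ∃ q : A, IsStarProjection q ∧ a * q = q ∧ δ • (1 - q) ≤ 1 - a := by
  set g : ℝ → ℝ := fun x => max ((x - (1 - δ)) / δ) 0 with hg_def
  have hg_spec : ∀ x ∈ spectrum ℝ a, (x ≤ 1 - δ ∧ g x = 0) ∨ (x = 1 ∧ g x = 1) := by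
    intro x hx
    rcases hgap x hx with hx | rfl
    · exact .inl ⟨hx, max_eq_right (div_nonpos_of_nonpos_of_nonneg (by linarith) hδ.le)⟩
    · exact .inr ⟨rfl, by simp [hg_def, hδ.ne']⟩
  refine ⟨cfc g a, ⟨?_, cfc_predicate g a⟩, ?_, ?_⟩
  · rw [IsIdempotentElem, ← cfc_mul g g a]
    refine cfc_congr fun x hx => ?_
    rcases hg_spec x hx with ⟨-, hx⟩ | ⟨-, hx⟩ <;> simp [hx]
  · nth_rw 1 [← cfc_id' ℝ a]
    rw [← cfc_mul _ g a]
    refine cfc_congr fun x hx => ?_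
    rcases hg_spec x hx with ⟨-, hx⟩ | ⟨rfl, hx⟩ <;> simp [hx]
  · have hlhs : δ • (1 - cfc g a) = cfc (fun x => δ * (1 - g x)) a := by
      rw [cfc_const_mul δ _ a, cfc_sub (fun _ => 1) g a, cfc_const_one ℝ a]
    have hrhs : 1 - a = cfc (fun x : ℝ => 1 - x) a := by
      rw [cfc_sub (fun _ : ℝ => (1 : ℝ)) _ a, cfc_const_one ℝ a, cfc_id' ℝ a]
    rw [hlhs, hrhs]
    refine cfc_mono fun x hx => ?_
    rcases hg_spec x hx with ⟨hx, hgx⟩ | ⟨rfl, hgx⟩ <;> simp only [hgx] <;> linarith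

end CStarAlgebra

theorem IsIdempotentElem.isUnit_one_sub_smul {𝕜 A : Type*} [Field 𝕜] [Ring A] [Algebra 𝕜 A]
    {p : A} (hp : IsIdempotentElem p) {c : 𝕜} (hc : c ≠ 1) : IsUnit (1 - c • p) := by
  have hcoeff : c / (1 - c) - c - c * (c / (1 - c)) = 0 := by
    field_simp [sub_ne_zero.2 hc.symm]
    ring
  refine ⟨⟨1 - c • p, 1 + (c / (1 - c)) • p, ?_, ?_⟩, rfl⟩
  · calc (1 - c • p) * (1 + (c / (1 - c)) • p)
        = 1 + (c / (1 - c) - c - c * (c / (1 - c))) • p := by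
          rw [mul_add, sub_mul, sub_mul, smul_mul_smul_comm, hp.eq, one_mul, mul_one, one_mul]
          module
      _ = 1 := by rw [hcoeff, zero_smul, add_zero]
  · calc (1 + (c / (1 - c)) • p) * (1 - c • p)
        = 1 + (c / (1 - c) - c - c * (c / (1 - c))) • p := by
          rw [mul_sub, add_mul, add_mul, smul_mul_smul_comm, hp.eq, one_mul, mul_one, one_mul]
          module
      _ = 1 := by rw [hcoeff, zero_smul, add_zero]

theorem spectrum.notMem_add_of_mul_eq_zero {𝕜 A : Type*} [Field 𝕜] [Ring A] [Algebra 𝕜 A]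
    {p b : A} (hp : IsIdempotentElem p) (hbp : b * p = 0) {t : 𝕜} (ht0 : t ≠ 0) (ht1 : t ≠ 1)
    (hb : t ∉ spectrum 𝕜 b) : t ∉ spectrum 𝕜 (p + b) := by
  rw [spectrum.notMem_iff] at hb ⊢
  have hfactor : algebraMap 𝕜 A t - (p + b) = (algebraMap 𝕜 A t - b) * (1 - t⁻¹ • p) := by
    rw [Algebra.algebraMap_eq_smul_one, mul_sub, mul_one, sub_mul, mul_smul_comm, mul_smul_comm,
      hbp, smul_zero, smul_mul_assoc, one_mul, smul_smul, inv_mul_cancel₀ ht0]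
    module
  rw [hfactor]
  exact hb.mul (hp.isUnit_one_sub_smul (inv_ne_one.2 ht1))

theorem ContinuousLinearMap.mul_eq_right_of_fixedPoints_subset {R M : Type*} [Semiring R]
    [TopologicalSpace M] [AddCommMonoid M] [Module R M] {P T Q : M →L[R] M}
    (hTP : Function.fixedPoints T ⊆ Function.fixedPoints P) (hTQ : T * Q = Q) : P * Q = Q :=
  ext fun ξ => hTP congr($hTQ ξ)

local notation "⟪" x ", " y "⟫" => @inner ℂ _ _ x y

variable {H : Type*} [NormedAddCommGroup H] [InnerProductSpace ℂ H] [CompleteSpace H]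

theorem stmt13 (T T' : H →L[ℂ] H) (h0 : 0 ≤ T') (hTT' : T' ≤ T) (h1 : T ≤ 1)
    (δ : ℝ) (hδ0 : 0 < δ) (hδ1 : δ < 1)
    (hgapT : ∀ t : ℝ, 1 - δ < t → t < 1 → (t : ℂ) ∉ spectrum ℂ T)
    (hT' : ∃ t : ℝ, 1 - δ < t ∧ t < 1 ∧ (t : ℂ) ∈ spectrum ℂ T')
    (P P' : H →L[ℂ] H)
    (hP : IsIdempotentElem P) (hPsa : IsSelfAdjoint P) (hPfix : ∀ ξ : H, P ξ = ξ ↔ T ξ = ξ)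
    (hP' : IsIdempotentElem P') (hP'sa : IsSelfAdjoint P')
    (hP'fix : ∀ ξ : H, P' ξ = ξ ↔ T' ξ = ξ) :
    P' ≤ P ∧ P' ≠ P := by
  obtain ⟨t, ht1, ht2, ht⟩ := hT'
  have hTsa : IsSelfAdjoint T := .of_nonneg (h0.trans hTT')
  have hP'proj : IsStarProjection P' := ⟨hP', hP'sa⟩
  have hT'P' : T' * P' = P' :=
    ContinuousLinearMap.mul_eq_right_of_fixedPoints_subset (fun ξ => (hP'fix ξ).1) hP'.eq
  have hTP' : T * P' = P' := mul_eq_right_of_le_of_le_one hTT' h1 hT'P'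
  refine ⟨hP'proj.le_of_mul_eq_right ⟨hP, hPsa⟩
    (ContinuousLinearMap.mul_eq_right_of_fixedPoints_subset (fun ξ => (hPfix ξ).2) hTP'), ?_⟩
  rintro rfl
  have hTgap : ∀ x ∈ spectrum ℝ T, x ≤ 1 - δ ∨ x = 1 := by
    intro x hx
    by_contra! h
    exact hgapT x h.1 (((CFC.le_one_iff T hTsa).1 h1 x hx).lt_of_ne h.2)
      (spectrum.algebraMap_mem ℂ hx)
  obtain ⟨Q, hQ, hTQ, hQgap⟩ := hTsa.exists_isStarProjection_of_spectrum_gap hδ0 hTgap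
  have hQP' : Q ≤ P' := hQ.le_of_mul_eq_right hP'proj
    (ContinuousLinearMap.mul_eq_right_of_fixedPoints_subset (fun ξ => (hPfix ξ).2) hTQ)
  have hbound : T' - P' ≤ algebraMap ℝ _ (1 - δ) :=
    hP'proj.sub_le_algebraMap_of_smul_one_sub_le hδ1.le <|
      (smul_le_smul_of_nonneg_left (sub_le_sub_left hQP' 1) hδ0.le).trans
        (hQgap.trans (sub_le_sub_left hTT' 1))
  have ht' : t ∈ spectrum ℝ (T' - P') := by
    by_contra h
    refine spectrum.notMem_add_of_mul_eq_zero hP' ?_ (by linarith) ht2.ne h ?_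
    · rw [sub_mul, hT'P', hP'.eq, sub_self]
    · rwa [add_sub_cancel, ← spectrum.algebraMap_mem_iff ℂ]
  linarith [(le_algebraMap_iff_spectrum_le (ha := (IsSelfAdjoint.of_nonneg h0).sub hP'sa)).1
    hbound t ht']
end

section
/- Let T₁ ≥ T₂ ≥ ⋯ be a non-increasing sequence of positive contractions on a separable Hilbert space H. If 1 is not in the essential spectrum of T_{n₀} for some n₀, then the sequence has uniform spectral gap at 1: there exist δ ∈ (0,1) and N ∈ ℕ with σ(T_n) ∩ (1−δ, 1) = ∅ for all n ≥ N. -/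
open Filter Topology

noncomputable section

local notation "⟪" x ", " y "⟫" => @inner ℂ _ _ x y

variable {H : Type*} [NormedAddCommGroup H] [InnerProductSpace ℂ H] [CompleteSpace H]

/-!
Suppose the spectra of the `T n` accumulate at `1` from below: pick `t_k → 1` in the spectrum
of `T (n_k)`, `n_k ≥ k`, with approximate eigenvectors `x_k`. Since the `T n` decrease,
`re ⟪T m x_k, x_k⟫ ≥ re ⟪T (n_k) x_k, x_k⟫ → 1` for each fixed `m`, so `T m x_k - x_k → 0`.
The `x_k` are weakly null: against the ranges of the `T m - 1` by the previous fact, and against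
a common fixed vector `y` because `(1 - t_k) ⟪y, x_k⟫ = ⟪y, (T (n_k) - t_k) x_k⟫`; these vectors
span a dense subspace. Finally a weakly null sequence of approximate fixed vectors of `T n₀` can
be thinned out to an orthonormal one, which the hypothesis on `T n₀` forbids.
-/

section

variable {E : Type*} [NormedAddCommGroup E] [InnerProductSpace ℂ E]

lemma norm_apply_smul_inv_norm (B : E →L[ℂ] E) (z : E) :
    ‖B ((‖z‖⁻¹ : ℂ) • z)‖ = ‖B z‖ / ‖z‖ := by
  rw [map_smul, norm_smul, norm_inv, Complex.norm_real, norm_norm, inv_mul_eq_div]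

lemma re_inner_apply_self_le_of_le {S T : E →L[ℂ] E} (h : S ≤ T) (x : E) :
    (⟪S x, x⟫).re ≤ (⟪T x, x⟫).re := by
  have := ((ContinuousLinearMap.le_def S T).mp h).re_inner_nonneg_left x
  rw [sub_apply, inner_sub_left, map_sub, RCLike.re_to_complex, RCLike.re_to_complex] at this
  linarith

lemma sub_norm_apply_sub_smul_le_re_inner (T : E →L[ℂ] E) {x : E} (hx : ‖x‖ = 1) (t : ℝ) :
    t - ‖T x - (t : ℂ) • x‖ ≤ (⟪T x, x⟫).re := by
  have hsplit : ⟪T x, x⟫ = ⟪T x - (t : ℂ) • x, x⟫ + t := by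
    rw [inner_sub_left, inner_smul_left, inner_self_eq_norm_sq_to_K, hx]
    simp
  have hbound : |(⟪T x - (t : ℂ) • x, x⟫).re| ≤ ‖T x - (t : ℂ) • x‖ :=
    (Complex.abs_re_le_norm _).trans ((norm_inner_le_norm _ _).trans_eq (by rw [hx, mul_one]))
  rw [hsplit, Complex.add_re, Complex.ofReal_re]
  linarith [neg_abs_le (⟪T x - (t : ℂ) • x, x⟫).re]

lemma norm_apply_sub_self_sq_le {S : E →L[ℂ] E} (hS : ‖S‖ ≤ 1) {x : E} (hx : ‖x‖ = 1) :
    ‖S x - x‖ ^ 2 ≤ 2 - 2 * (⟪S x, x⟫).re := by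
  have hSx : ‖S x‖ ≤ 1 := (S.le_opNorm x).trans (by rw [hx, mul_one]; exact hS)
  rw [@norm_sub_sq ℂ, hx]
  have : ‖S x‖ ^ 2 ≤ 1 := by nlinarith [norm_nonneg (S x)]
  simp only [RCLike.re_to_complex]
  linarith

lemma tendsto_norm_apply_sub_self_of_approx_eigen {T : ℕ → E →L[ℂ] E} (hT : Antitone T)
    (hnorm : ∀ n, ‖T n‖ ≤ 1) {x : ℕ → E} (hx : ∀ k, ‖x k‖ = 1)
    {n : ℕ → ℕ} (hn : ∀ k, k ≤ n k) {t e : ℕ → ℝ}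
    (he : ∀ k, ‖T (n k) (x k) - (t k : ℂ) • x k‖ ≤ e k)
    (hte : Tendsto (fun k => t k - e k) atTop (𝓝 1)) (m : ℕ) :
    Tendsto (fun k => ‖T m (x k) - x k‖) atTop (𝓝 0) := by
  have hsq : Tendsto (fun k => ‖T m (x k) - x k‖ ^ 2) atTop (𝓝 0) := by
    have hbound : Tendsto (fun k => 2 - 2 * (t k - e k)) atTop (𝓝 0) := by
      simpa using (hte.const_mul 2).const_sub 2
    refine squeeze_zero' (Eventually.of_forall fun _ => by positivity) ?_ hbound
    filter_upwards [eventually_ge_atTop m] with k hk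
    have hre := re_inner_apply_self_le_of_le (hT (hk.trans (hn k))) (x k)
    have hlow := sub_norm_apply_sub_smul_le_re_inner (T (n k)) (hx k) (t k)
    linarith [norm_apply_sub_self_sq_le (hnorm m) (hx k), he k]
  simpa [Real.sqrt_sq (norm_nonneg _)] using hsq.sqrt

lemma exists_mem_orthogonal_norm_eq_one_norm_apply_lt (B : E →L[ℂ] E) {x : ℕ → E}
    (hx : ∀ k, ‖x k‖ = 1) (hBx : Tendsto (fun k => ‖B (x k)‖) atTop (𝓝 0))
    (hw : ∀ y, Tendsto (fun k => ⟪y, x k⟫) atTop (𝓝 0))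
    (K : Submodule ℂ E) [FiniteDimensional ℂ K] {ε : ℝ} (hε : 0 < ε) :
    ∃ z ∈ Kᗮ, ‖z‖ = 1 ∧ ‖B z‖ < ε := by
  set z : ℕ → E := fun k => x k - K.starProjection (x k)
  have hP : Tendsto (fun k => K.starProjection (x k)) atTop (𝓝 0) := by
    let b := stdOrthonormalBasis ℂ K
    have hsum : ∀ k, K.starProjection (x k) = ∑ i, ⟪(b i : E), x k⟫ • (b i : E) := fun k => by
      simp [K.starProjection_apply, b.orthogonalProjectionOnto_apply_eq_sum]
    simp_rw [hsum]
    simpa using tendsto_finsetSum _ fun i _ => (hw (b i)).smul_const (b i : E)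
  have hz_norm : Tendsto (fun k => ‖z k‖) atTop (𝓝 1) := by
    rw [tendsto_iff_norm_sub_tendsto_zero]
    refine squeeze_zero (fun _ => norm_nonneg _) (fun k => ?_) (by simpa using hP.norm)
    simpa [z, hx k] using abs_norm_sub_norm_le (z k) (x k)
  have hBz : Tendsto (fun k => ‖B (z k)‖) atTop (𝓝 0) := by
    have hBP : Tendsto (fun k => B (K.starProjection (x k))) atTop (𝓝 0) :=
      (B.continuous.tendsto' 0 0 (map_zero B)).comp hP
    simpa [z] using ((tendsto_zero_iff_norm_tendsto_zero.mpr hBx).sub hBP).norm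
  have hratio : Tendsto (fun k => ‖B (z k)‖ / ‖z k‖) atTop (𝓝 0) := by
    have h := hBz.div hz_norm one_ne_zero
    rwa [zero_div] at h
  obtain ⟨k, hk_pos, hk⟩ := ((hz_norm.eventually (lt_mem_nhds zero_lt_one)).and
    (hratio.eventually (gt_mem_nhds hε))).exists
  refine ⟨(‖z k‖⁻¹ : ℂ) • z k, Kᗮ.smul_mem _ (K.sub_starProjection_mem_orthogonal _),
    norm_smul_inv_norm (norm_pos_iff.mp hk_pos), ?_⟩
  rwa [norm_apply_smul_inv_norm]

lemma exists_orthonormal_tendsto_norm_apply_zero (B : E →L[ℂ] E) {x : ℕ → E}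
    (hx : ∀ k, ‖x k‖ = 1) (hBx : Tendsto (fun k => ‖B (x k)‖) atTop (𝓝 0))
    (hw : ∀ y, Tendsto (fun k => ⟪y, x k⟫) atTop (𝓝 0)) :
    ∃ ξ : ℕ → E, Orthonormal ℂ ξ ∧ Tendsto (fun n => ‖B (ξ n)‖) atTop (𝓝 0) := by
  classical
  obtain ⟨f, hfP, hfr⟩ := exists_seq_of_forall_finset_exists
    (fun p : ℕ × E => ‖p.2‖ = 1 ∧ ‖B p.2‖ < 1 / ((p.1 : ℝ) + 1))
    (fun p q => p.1 < q.1 ∧ ⟪p.2, q.2⟫ = 0) fun s _ => by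
      obtain ⟨z, hzK, hz1, hBz⟩ := exists_mem_orthogonal_norm_eq_one_norm_apply_lt B hx hBx hw
        (Submodule.span ℂ (s.image Prod.snd : Set E))
        (ε := 1 / (((s.sup Prod.fst + 1 : ℕ) : ℝ) + 1)) (by positivity)
      refine ⟨(s.sup Prod.fst + 1, z), ⟨hz1, hBz⟩, fun p hp =>
        ⟨Nat.lt_succ_of_le (Finset.le_sup hp), ?_⟩⟩
      exact Submodule.inner_right_of_mem_orthogonal
        (Submodule.subset_span (Finset.mem_image_of_mem _ hp)) hzK
  have hmono : StrictMono fun n => (f n).1 :=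
    strictMono_nat_of_lt_succ fun n => (hfr n (n + 1) n.lt_succ_self).1
  refine ⟨fun n => (f n).2, ⟨fun n => (hfP n).1, fun m n hmn => ?_⟩, ?_⟩
  · rcases hmn.lt_or_gt with h | h
    · exact (hfr m n h).2
    · exact inner_eq_zero_symm.mp (hfr n m h).2
  · refine squeeze_zero (fun _ => norm_nonneg _) (fun n => (hfP n).2.le.trans ?_)
      tendsto_one_div_add_atTop_nhds_zero_nat
    gcongr
    exact_mod_cast hmono.id_le n

end

lemma exists_norm_eq_one_norm_apply_lt_of_not_isUnit {A : H →L[ℂ] H} (hA : IsSelfAdjoint A)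
    (hA' : ¬ IsUnit A) {ε : ℝ} (hε : 0 < ε) : ∃ x : H, ‖x‖ = 1 ∧ ‖A x‖ < ε := by
  obtain ⟨x, hx⟩ : ∃ x : H, ‖A x‖ < ε * ‖x‖ := by
    by_contra! h
    refine hA' ((isUnit_pow_iff two_ne_zero).mp
      (ContinuousLinearMap.isUnit_of_forall_le_norm_inner_map (A ^ 2) (c := (ε ^ 2).toNNReal)
        (by positivity) fun x => ?_))
    have hAA : ⟪(A ^ 2) x, x⟫ = ⟪A x, A x⟫ := hA.isSymmetric (A x) x
    rw [hAA, inner_self_eq_norm_sq_to_K, norm_pow, RCLike.norm_ofReal, abs_norm,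
      Real.coe_toNNReal _ (by positivity), ← mul_pow, mul_comm]
    exact pow_le_pow_left₀ (by positivity) (h x) 2
  have hx0 : x ≠ 0 := by rintro rfl; simp at hx
  refine ⟨(‖x‖⁻¹ : ℂ) • x, norm_smul_inv_norm hx0, ?_⟩
  rw [norm_apply_smul_inv_norm, div_lt_iff₀ (norm_pos_iff.mpr hx0)]
  exact hx

lemma exists_norm_eq_one_norm_apply_sub_smul_lt {T : H →L[ℂ] H} (hT : IsSelfAdjoint T) {t : ℝ}
    (ht : (t : ℂ) ∈ spectrum ℂ T) {ε : ℝ} (hε : 0 < ε) :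
    ∃ x : H, ‖x‖ = 1 ∧ ‖T x - (t : ℂ) • x‖ < ε := by
  have ht_sa : IsSelfAdjoint (algebraMap ℂ (H →L[ℂ] H) t) :=
    IsSelfAdjoint.algebraMap _ (Complex.conj_ofReal t)
  obtain ⟨x, hx1, hx⟩ := exists_norm_eq_one_norm_apply_lt_of_not_isUnit (ht_sa.sub hT)
    (spectrum.mem_iff.mp ht) hε
  refine ⟨x, hx1, ?_⟩
  rwa [sub_apply, ContinuousLinearMap.algebraMap_apply, norm_sub_rev] at hx

lemma abs_one_sub_mul_norm_inner_le {S : H →L[ℂ] H} (hS : IsSelfAdjoint S) {y : H} (hy : S y = y)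
    (x : H) (t : ℝ) : |1 - t| * ‖⟪y, x⟫‖ ≤ ‖y‖ * ‖S x - (t : ℂ) • x‖ := by
  have hsym : ⟪S y, x⟫ = ⟪y, S x⟫ := hS.isSymmetric y x
  have h : ⟪y, S x - (t : ℂ) • x⟫ = ((1 - t : ℝ) : ℂ) * ⟪y, x⟫ := by
    rw [inner_sub_right, inner_smul_right, ← hsym]
    simp [hy, sub_mul]
  calc |1 - t| * ‖⟪y, x⟫‖ = ‖⟪y, S x - (t : ℂ) • x⟫‖ := by
        rw [h, norm_mul, Complex.norm_real, Real.norm_eq_abs]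
    _ ≤ ‖y‖ * ‖S x - (t : ℂ) • x‖ := norm_inner_le_norm _ _

lemma tendsto_inner_zero_of_tendsto_fixed {ι : Type*} {S : ι → H →L[ℂ] H}
    (hS : ∀ i, IsSelfAdjoint (S i)) {x : ℕ → H} (hx : ∀ k, ‖x k‖ ≤ 1)
    (hSx : ∀ i, Tendsto (fun k => ‖S i (x k) - x k‖) atTop (𝓝 0))
    (hfix : ∀ y, (∀ i, S i y = y) → Tendsto (fun k => ⟪y, x k⟫) atTop (𝓝 0)) (y : H) :
    Tendsto (fun k => ⟪y, x k⟫) atTop (𝓝 0) := by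
  have hsym : ∀ i a b, ⟪S i a, b⟫ = ⟪a, S i b⟫ := fun i => (hS i).isSymmetric
  let V : Submodule ℂ H :=
    { carrier := {y | Tendsto (fun k => ⟪y, x k⟫) atTop (𝓝 0)}
      zero_mem' := by simp
      add_mem' := fun {a b} ha hb => by simpa [inner_add_left] using ha.add hb
      smul_mem' := fun c a ha => by simpa [inner_smul_left] using ha.mul_const (starRingEnd ℂ c) }
  have hV_closed : IsClosed (V : Set H) := by
    have hlip : ∀ k, LipschitzWith 1 fun y : H => ⟪y, x k⟫ := fun k =>
      LipschitzWith.of_dist_le_mul fun a b => by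
        rw [dist_eq_norm, dist_eq_norm, ← inner_sub_left, NNReal.coe_one, one_mul]
        exact (norm_inner_le_norm _ _).trans (mul_le_of_le_one_right (norm_nonneg _) (hx k))
    exact ((LipschitzWith.uniformEquicontinuous _ 1 hlip).equicontinuous).isClosed_setOfPred_tendsto
      continuous_const
  have hrange : ∀ i z, S i z - z ∈ V := fun i z => by
    have h : ∀ k, ⟪S i z - z, x k⟫ = ⟪z, S i (x k) - x k⟫ := fun k => by
      rw [inner_sub_left, inner_sub_right, hsym]
    show Tendsto _ _ _
    simp_rw [h]
    rw [tendsto_zero_iff_norm_tendsto_zero]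
    refine squeeze_zero (fun _ => norm_nonneg _) (fun k => norm_inner_le_norm _ _) ?_
    simpa using (hSx i).const_mul ‖z‖
  have hperp : Vᗮ = ⊥ := by
    refine (Submodule.eq_bot_iff _).mpr fun w hw => ?_
    have hw_fix : ∀ i, S i w = w := fun i => by
      have h : ⟪S i w - w, S i w - w⟫ = 0 := by
        rw [inner_sub_left, hsym, ← inner_sub_right, inner_eq_zero_symm]
        exact Submodule.inner_right_of_mem_orthogonal (hrange i _) hw
      exact sub_eq_zero.mp (inner_self_eq_zero.mp h)
    exact inner_self_eq_zero.mp (Submodule.inner_right_of_mem_orthogonal (hfix w hw_fix) hw)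
  have hV : V = ⊤ := by
    rw [← hV_closed.submodule_topologicalClosure_eq, Submodule.topologicalClosure_eq_top_iff, hperp]
  exact (hV ▸ Submodule.mem_top : y ∈ V)

theorem exists_orthonormal_tendsto_of_spectrum_accumulates_at_one {T : ℕ → H →L[ℂ] H}
    (hT : Antitone T) (hsa : ∀ n, IsSelfAdjoint (T n)) (hnorm : ∀ n, ‖T n‖ ≤ 1)
    (h : ∀ δ : ℝ, 0 < δ → δ < 1 → ∀ N, ∃ n ≥ N, ∃ t : ℝ, 1 - δ < t ∧ t < 1 ∧
      (t : ℂ) ∈ spectrum ℂ (T n)) (m : ℕ) :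
    ∃ ξ : ℕ → H, Orthonormal ℂ ξ ∧ Tendsto (fun j => ‖T m (ξ j) - ξ j‖) atTop (𝓝 0) := by
  have hδ : ∀ k : ℕ, 0 < 1 / ((k : ℝ) + 2) ∧ 1 / ((k : ℝ) + 2) < 1 := fun k =>
    ⟨by positivity, by rw [div_lt_one (by positivity)]; linarith [(k.cast_nonneg : (0 : ℝ) ≤ k)]⟩
  choose n hn t ht_lb ht_lt hts using fun k : ℕ => h _ (hδ k).1 (hδ k).2 k
  have ht : Tendsto t atTop (𝓝 1) := by
    have hlb : Tendsto (fun k : ℕ => 1 - 1 / ((k : ℝ) + 2)) atTop (𝓝 1) := by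
      have h0 := (tendsto_one_div_add_atTop_nhds_zero_nat (𝕜 := ℝ)).comp (tendsto_add_atTop_nat 1)
      simpa [add_assoc, one_add_one_eq_two] using h0.const_sub (1 : ℝ)
    exact tendsto_of_tendsto_of_tendsto_of_le_of_le hlb tendsto_const_nhds
      (fun k => (ht_lb k).le) (fun k => (ht_lt k).le)
  -- The error must be `o(1 - t)`: `hweak` divides it by `1 - t`.
  choose x hx1 hx using fun k => exists_norm_eq_one_norm_apply_sub_smul_lt (hsa (n k)) (hts k)
    (pow_pos (sub_pos.mpr (ht_lt k)) 2)
  have hfix : ∀ i, Tendsto (fun k => ‖T i (x k) - x k‖) atTop (𝓝 0) :=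
    tendsto_norm_apply_sub_self_of_approx_eigen hT hnorm hx1 hn (fun k => (hx k).le)
      (by simpa using ht.sub (((tendsto_const_nhds (x := (1 : ℝ))).sub ht).pow 2))
  have hweak : ∀ y, Tendsto (fun k => ⟪y, x k⟫) atTop (𝓝 0) :=
    tendsto_inner_zero_of_tendsto_fixed hsa (fun k => (hx1 k).le) hfix fun y hy => by
      rw [tendsto_zero_iff_norm_tendsto_zero]
      refine squeeze_zero (fun _ => norm_nonneg _) (fun k => ?_)
        (by simpa using ((tendsto_const_nhds (x := (1 : ℝ))).sub ht).mul_const ‖y‖)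
      have hpos : 0 < 1 - t k := sub_pos.mpr (ht_lt k)
      have hle := abs_one_sub_mul_norm_inner_le (hsa (n k)) (hy (n k)) (x k) (t k)
      rw [abs_of_pos hpos] at hle
      refine le_of_mul_le_mul_left (hle.trans ?_) hpos
      nlinarith [(hx k).le, norm_nonneg y]
  obtain ⟨ξ, hξ, hlim⟩ := exists_orthonormal_tendsto_norm_apply_zero (T m - 1) hx1
    (by simpa using hfix m) hweak
  exact ⟨ξ, hξ, by simpa using hlim⟩

theorem stmt16_general
    (T : ℕ → H →L[ℂ] H) (hpos : ∀ n, 0 ≤ T n) (hcontr : ∀ n, T n ≤ 1)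
    (hmono : ∀ n, T (n + 1) ≤ T n) (n₀ : ℕ)
    (hess : ¬ ∃ ξ : ℕ → H, Orthonormal ℂ ξ ∧
      Tendsto (fun n => ‖T n₀ (ξ n) - ξ n‖) atTop (nhds 0)) :
    ∃ δ : ℝ, 0 < δ ∧ δ < 1 ∧ ∃ N : ℕ, ∀ n ≥ N, ∀ t : ℝ, 1 - δ < t → t < 1 →
      (t : ℂ) ∉ spectrum ℂ (T n) := by
  by_contra h
  push Not at h
  exact hess (exists_orthonormal_tendsto_of_spectrum_accumulates_at_one
    (antitone_nat_of_succ_le hmono)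
    (fun n => ((ContinuousLinearMap.nonneg_iff_isPositive _).mp (hpos n)).isSelfAdjoint)
    (fun n => (CStarAlgebra.norm_le_one_iff_of_nonneg _ (hpos n)).mpr (hcontr n)) h n₀)

theorem stmt16 [TopologicalSpace.SeparableSpace H]
    (T : ℕ → H →L[ℂ] H) (hpos : ∀ n, 0 ≤ T n) (hcontr : ∀ n, T n ≤ 1)
    (hmono : ∀ n, T (n + 1) ≤ T n) (n₀ : ℕ)
    (hess : ¬ ∃ ξ : ℕ → H, Orthonormal ℂ ξ ∧
      Tendsto (fun n => ‖T n₀ (ξ n) - ξ n‖) atTop (nhds 0)) :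
    ∃ δ : ℝ, 0 < δ ∧ δ < 1 ∧ ∃ N : ℕ, ∀ n ≥ N, ∀ t : ℝ, 1 - δ < t → t < 1 →
      (t : ℂ) ∉ spectrum ℂ (T n) :=
  stmt16_general T hpos hcontr hmono n₀ hess
end
end

section
/- There exists a sequence (ξ_n) of unit vectors in an infinite-dimensional separable Hilbert space H such that (i) ξ_n → 0 weakly, (ii) (‖ξ_n‖) is non-increasing, (iii) for every k, ‖ξ_{n+k} − ξ_n‖ → 0 as n → ∞, but the set {ξ_n : n ∈ ℕ} is not totally bounded. -/
/-!
Pick an orthonormal sequence `e` and let `arcPath e` be the path which on `[n, n + 1]` runs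
along the quarter circle from `e n` to `e (n + 1)` at speed `π / 2`; it is `π / 2`-Lipschitz,
and we take `ξ m = arcPath e √m`. Instead of the `n` equally spaced angles on the `n`-th arc used
in the paper, this puts the `2n + 1` points `n² ≤ m < (n + 1)²` on it; what matters is only that
the steps shrink: `‖ξ (m + k) - ξ m‖ ≤ π / 2 * (√(m + k) - √m) → 0`. Each `ξ m` lies in the span
of two consecutive `e n`, so `⟪ξ m, η⟫ → 0` by Bessel's inequality, while the `ξ (n²) = e n` are
pairwise at distance `√2`, so the range is not totally bounded.
-/

open Filter Topology

noncomputable section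

local notation "⟪" x ", " y "⟫" => @inner ℂ _ _ x y

variable {H : Type*} [NormedAddCommGroup H] [InnerProductSpace ℂ H] [CompleteSpace H]

open Real Set

theorem dist_le_mul_sub_of_forall_Icc_nat {X : Type*} [PseudoMetricSpace X] {f : ℝ → X} {K : ℝ}
    (hf : ∀ n : ℕ, ∀ s t : ℝ, n ≤ s → s ≤ t → t ≤ n + 1 → dist (f s) (f t) ≤ K * (t - s))
    {s t : ℝ} (hs : 0 ≤ s) (hst : s ≤ t) : dist (f s) (f t) ≤ K * (t - s) := by
  suffices key : ∀ k : ℕ, ∀ t, s ≤ t → t ≤ ⌊s⌋₊ + 1 + k → dist (f s) (f t) ≤ K * (t - s) from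
    key ⌈t⌉₊ t hst (by linarith [Nat.le_ceil t, Nat.floor_le hs])
  intro k
  induction k with
  | zero => exact fun t hst ht => hf _ s t (Nat.floor_le hs) hst (by simpa using ht)
  | succ k ih =>
    intro t hst ht
    by_cases hle : t ≤ ⌊s⌋₊ + 1 + k
    · exact ih t hst hle
    set a : ℕ := ⌊s⌋₊ + 1 + k
    have hsa : s ≤ a := by push_cast [a]; linarith [Nat.lt_floor_add_one s]
    calc dist (f s) (f t) ≤ dist (f s) (f a) + dist (f a) (f t) := dist_triangle _ _ _
      _ ≤ K * (a - s) + K * (t - a) :=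
        add_le_add (ih a hsa (by push_cast [a]; rfl))
          (hf a a t le_rfl (by push_cast [a]; linarith) (by push_cast [a] at ht ⊢; linarith))
      _ = K * (t - s) := by ring

theorem not_totallyBounded_range_of_pairwise_le_dist {ι X : Type*} [Infinite ι]
    [PseudoMetricSpace X] {f : ι → X} {ε : ℝ} (hε : 0 < ε)
    (hf : Pairwise fun i j => ε ≤ dist (f i) (f j)) : ¬ TotallyBounded (range f) := by
  intro htb
  obtain ⟨t, ht, hcover⟩ := Metric.totallyBounded_iff.1 htb (ε / 2) (half_pos hε)
  have hcenter (i : ι) : ∃ c ∈ t, dist (f i) c < ε / 2 := by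
    simpa using hcover (mem_range_self i)
  choose c hct hc using hcenter
  have := ht.to_subtype
  obtain ⟨i, j, hij, hcij⟩ := Finite.exists_ne_map_eq_of_infinite fun i => (⟨c i, hct i⟩ : t)
  have hcij : c i = c j := congrArg Subtype.val hcij
  have := dist_triangle_right (f i) (f j) (c i)
  linarith [hf hij, hc i, hcij ▸ hc j]

theorem tendsto_sqrt_add_sub_sqrt (c : ℝ) : Tendsto (fun x : ℝ => √(x + c) - √x) atTop (𝓝 0) := by
  have hden : Tendsto (fun x : ℝ => √(x + c) + √x) atTop atTop :=
    tendsto_atTop_add_left_of_le _ 0 (fun _ => sqrt_nonneg _) tendsto_sqrt_atTop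
  refine ((tendsto_const_nhds (x := c)).div_atTop hden).congr' ?_
  filter_upwards [eventually_gt_atTop 0, eventually_gt_atTop (-c)] with x hx hxc
  rw [div_eq_iff (by positivity)]
  ring_nf
  rw [sq_sqrt hx.le, sq_sqrt (by linarith)]
  ring

section InnerProductSpace

variable {𝕜 E : Type*} [RCLike 𝕜] [NormedAddCommGroup E] [InnerProductSpace 𝕜 E]

theorem Orthonormal.tendsto_inner_atTop_zero {e : ℕ → E} (he : Orthonormal 𝕜 e) (w : E) :
    Tendsto (fun n => inner 𝕜 (e n) w) atTop (𝓝 0) := by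
  rw [tendsto_zero_iff_norm_tendsto_zero]
  simpa [sqrt_sq (norm_nonneg _)] using (he.inner_products_summable w).tendsto_atTop_zero.sqrt

theorem Orthonormal.one_le_dist {ι : Type*} {e : ι → E} (he : Orthonormal 𝕜 e) {i j : ι}
    (hij : i ≠ j) : 1 ≤ dist (e i) (e j) := by
  have h : ‖e i - e j‖ ^ 2 = 2 := by
    rw [@norm_sub_sq 𝕜, he.inner_eq_zero hij, he.1 i, he.1 j]
    norm_num
  rw [dist_eq_norm, ← sq_le_sq₀ zero_le_one (norm_nonneg _), h]
  norm_num

theorem Orthonormal.not_totallyBounded_range {ι : Type*} [Infinite ι] {e : ι → E}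
    (he : Orthonormal 𝕜 e) : ¬ TotallyBounded (range e) :=
  not_totallyBounded_range_of_pairwise_le_dist one_pos fun _ _ => he.one_le_dist

theorem exists_orthonormal_nat_of_not_finiteDimensional [CompleteSpace E]
    (h : ¬ FiniteDimensional 𝕜 E) : ∃ e : ℕ → E, Orthonormal 𝕜 e := by
  obtain ⟨w, b, -⟩ := exists_hilbertBasis 𝕜 E
  have : Infinite w := by
    refine infinite_coe_iff.2 fun hfin => h ?_
    have := hfin.fintype
    exact Module.Finite.of_basis b.toOrthonormalBasis.toBasis
  exact ⟨b ∘ Infinite.natEmbedding w, b.orthonormal.comp _ (Infinite.natEmbedding w).injective⟩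

variable (𝕜) in
def circlePoint (u v : E) (θ : ℝ) : E := (cos θ : 𝕜) • u + (sin θ : 𝕜) • v

section circlePoint

variable {u v : E}

@[simp]
theorem circlePoint_zero : circlePoint 𝕜 u v 0 = u := by simp [circlePoint]

@[simp]
theorem circlePoint_pi_div_two : circlePoint 𝕜 u v (π / 2) = v := by simp [circlePoint]

theorem norm_ofReal_smul_add_ofReal_smul_sq (hu : ‖u‖ = 1) (hv : ‖v‖ = 1) (huv : inner 𝕜 u v = 0)
    (a b : ℝ) : ‖(a : 𝕜) • u + (b : 𝕜) • v‖ ^ 2 = a ^ 2 + b ^ 2 := by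
  have h := norm_add_sq_eq_norm_sq_add_norm_sq_of_inner_eq_zero ((a : 𝕜) • u) ((b : 𝕜) • v)
    (by rw [inner_smul_left, inner_smul_right, huv, mul_zero, mul_zero])
  simp only [norm_smul, RCLike.norm_ofReal, hu, hv, mul_one] at h
  rw [sq, h, ← sq_abs a, ← sq_abs b]
  ring

theorem norm_circlePoint (hu : ‖u‖ = 1) (hv : ‖v‖ = 1) (huv : inner 𝕜 u v = 0) (θ : ℝ) :
    ‖circlePoint 𝕜 u v θ‖ = 1 := by
  rw [← sq_eq_sq₀ (norm_nonneg _) zero_le_one, one_pow, circlePoint,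
    norm_ofReal_smul_add_ofReal_smul_sq hu hv huv, cos_sq_add_sin_sq]

theorem norm_circlePoint_sub_le (hu : ‖u‖ = 1) (hv : ‖v‖ = 1) (huv : inner 𝕜 u v = 0)
    (θ φ : ℝ) : ‖circlePoint 𝕜 u v θ - circlePoint 𝕜 u v φ‖ ≤ |θ - φ| := by
  have hsub : circlePoint 𝕜 u v θ - circlePoint 𝕜 u v φ =
      ((cos θ - cos φ : ℝ) : 𝕜) • u + ((sin θ - sin φ : ℝ) : 𝕜) • v := by
    simp only [circlePoint, RCLike.ofReal_sub, sub_smul]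
    abel
  rw [← sq_le_sq₀ (norm_nonneg _) (abs_nonneg _), hsub,
    norm_ofReal_smul_add_ofReal_smul_sq hu hv huv, sq_abs]
  -- the squared chord is `2 - 2 cos (θ - φ)`
  nlinarith [one_sub_sq_div_two_le_cos (x := θ - φ), cos_sub θ φ, cos_sq_add_sin_sq θ,
    cos_sq_add_sin_sq φ]

theorem norm_inner_circlePoint_le (w : E) (θ : ℝ) :
    ‖inner 𝕜 (circlePoint 𝕜 u v θ) w‖ ≤ ‖inner 𝕜 u w‖ + ‖inner 𝕜 v w‖ := by
  rw [circlePoint, inner_add_left, inner_smul_left, inner_smul_left]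
  refine (norm_add_le _ _).trans (add_le_add ?_ ?_) <;>
  · rw [norm_mul, RCLike.norm_conj, RCLike.norm_ofReal]
    exact mul_le_of_le_one_left (norm_nonneg _) (by simp [abs_cos_le_one, abs_sin_le_one])

end circlePoint

variable (𝕜) in
def arcPath (e : ℕ → E) (t : ℝ) : E :=
  circlePoint 𝕜 (e ⌊t⌋₊) (e (⌊t⌋₊ + 1)) (π / 2 * (t - ⌊t⌋₊))

section arcPath

variable {e : ℕ → E}

theorem arcPath_eq_circlePoint {n : ℕ} {t : ℝ} (hn : n ≤ t) (ht : t ≤ n + 1) :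
    arcPath 𝕜 e t = circlePoint 𝕜 (e n) (e (n + 1)) (π / 2 * (t - n)) := by
  rcases ht.lt_or_eq with ht | rfl
  · rw [arcPath, (Nat.floor_eq_iff ((Nat.cast_nonneg n).trans hn)).2 ⟨hn, ht⟩]
  · rw [arcPath, show ((n : ℝ) + 1) = (n + 1 : ℕ) by push_cast; rfl, Nat.floor_natCast]
    simp

theorem arcPath_natCast (n : ℕ) : arcPath 𝕜 e n = e n := by
  simp [arcPath]

theorem norm_arcPath (he : Orthonormal 𝕜 e) (t : ℝ) : ‖arcPath 𝕜 e t‖ = 1 :=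
  norm_circlePoint (he.1 _) (he.1 _) (he.2 (by omega)) _

theorem dist_arcPath_le (he : Orthonormal 𝕜 e) {s t : ℝ} (hs : 0 ≤ s) (hst : s ≤ t) :
    dist (arcPath 𝕜 e s) (arcPath 𝕜 e t) ≤ π / 2 * (t - s) := by
  refine dist_le_mul_sub_of_forall_Icc_nat (fun n s t hns hst htn => ?_) hs hst
  rw [dist_comm, dist_eq_norm, arcPath_eq_circlePoint hns (hst.trans htn),
    arcPath_eq_circlePoint (hns.trans hst) htn]
  refine (norm_circlePoint_sub_le (he.1 _) (he.1 _) (he.2 (by omega)) _ _).trans_eq ?_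
  rw [← mul_sub, abs_mul, abs_of_pos (by positivity), abs_of_nonneg (by linarith)]
  ring

theorem tendsto_inner_arcPath_atTop (he : Orthonormal 𝕜 e) (w : E) :
    Tendsto (fun t => inner 𝕜 (arcPath 𝕜 e t) w) atTop (𝓝 0) := by
  have hlim := (he.tendsto_inner_atTop_zero w).norm
  rw [norm_zero] at hlim
  refine squeeze_zero_norm (fun t => norm_inner_circlePoint_le w _) ?_
  simpa using (hlim.comp (tendsto_nat_floor_atTop (α := ℝ))).add
    (hlim.comp ((tendsto_add_atTop_nat 1).comp tendsto_nat_floor_atTop))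

theorem tendsto_norm_arcPath_sqrt_add_sub (he : Orthonormal 𝕜 e) (k : ℕ) :
    Tendsto (fun m : ℕ => ‖arcPath 𝕜 e √((m + k : ℕ) : ℝ) - arcPath 𝕜 e √(m : ℝ)‖) atTop (𝓝 0) := by
  have hbound (m : ℕ) :
      ‖arcPath 𝕜 e √((m + k : ℕ) : ℝ) - arcPath 𝕜 e √(m : ℝ)‖ ≤ π / 2 * (√(m + k) - √m) := by
    rw [← dist_eq_norm, dist_comm, Nat.cast_add]
    exact dist_arcPath_le he (sqrt_nonneg _) (sqrt_le_sqrt (by simp))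
  refine squeeze_zero (fun _ => norm_nonneg _) hbound ?_
  simpa using ((tendsto_sqrt_add_sub_sqrt k).comp tendsto_natCast_atTop_atTop).const_mul (π / 2)

theorem range_subset_range_arcPath_sqrt : range e ⊆ range fun m : ℕ => arcPath 𝕜 e √(m : ℝ) := by
  rintro _ ⟨n, rfl⟩
  exact ⟨n ^ 2, by simp [arcPath_natCast]⟩

end arcPath

end InnerProductSpace

theorem stmt19_general (hinf : ¬ FiniteDimensional ℂ H) :
    ∃ ξ : ℕ → H, (∀ n, ‖ξ n‖ = 1) ∧
      (∀ η : H, Tendsto (fun n => ⟪ξ n, η⟫) atTop (nhds 0)) ∧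
      (∀ n, ‖ξ (n + 1)‖ ≤ ‖ξ n‖) ∧
      (∀ k : ℕ, Tendsto (fun n => ‖ξ (n + k) - ξ n‖) atTop (nhds 0)) ∧
      ¬ TotallyBounded (Set.range ξ) := by
  obtain ⟨e, he⟩ := exists_orthonormal_nat_of_not_finiteDimensional hinf
  refine ⟨fun m => arcPath ℂ e √m, fun m => norm_arcPath he _,
    fun η => (tendsto_inner_arcPath_atTop he η).comp
      (tendsto_sqrt_atTop.comp tendsto_natCast_atTop_atTop),
    fun m => by rw [norm_arcPath he, norm_arcPath he], tendsto_norm_arcPath_sqrt_add_sub he,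
    fun htb => he.not_totallyBounded_range (htb.subset range_subset_range_arcPath_sqrt)⟩

theorem stmt19 [TopologicalSpace.SeparableSpace H] (hinf : ¬ FiniteDimensional ℂ H) :
    ∃ ξ : ℕ → H, (∀ n, ‖ξ n‖ = 1) ∧
      (∀ η : H, Tendsto (fun n => ⟪ξ n, η⟫) atTop (nhds 0)) ∧
      (∀ n, ‖ξ (n + 1)‖ ≤ ‖ξ n‖) ∧
      (∀ k : ℕ, Tendsto (fun n => ‖ξ (n + k) - ξ n‖) atTop (nhds 0)) ∧
      ¬ TotallyBounded (Set.range ξ) :=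
  stmt19_general hinf
end
end
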